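/- arXiv:2110.08686 — 3 statements merged into one kernel-verified Lean document; each statement's English description precedes it below -/
import Mathlib

section
/- Let S : ℝ ⇒ ℝⁿ be a smooth sweeping process with bounded values satisfying assumption (A1), and let a ∈ 𝒯. Suppose there exist b > a and an increasing continuous function σ : [a,b] → [0,∞) with σ(a) = 0 such that ℓ(γ) ≤ σ(t₂) − σ(t₁) for all a ≤ t₁ < t₂ ≤ b and every orbit γ ∈ AC(S,[t₁,t₂]). Then there exists M > 0 (one may take M = σ(b)) such that ℓ(γ) ≤ M for every piecewise absolutely continuous orbit γ ∈ PAC(S,[a,b]). -/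
open Set Metric Filter MeasureTheory
open scoped ENNReal RealInnerProductSpace Topology Pointwise

section Preliminaries

variable {E : Type*} [NormedAddCommGroup E] [InnerProductSpace ℝ E]

/-- The graph `𝒮 = {(t,x) : x ∈ S t}` of a multivalued map `S : ℝ ⇒ E`. -/
def sgraph (S : ℝ → Set E) : Set (ℝ × E) := {p | p.2 ∈ S p.1}

/-- The effective domain of a multivalued map. -/
def sdom (S : ℝ → Set E) : Set ℝ := {t | (S t).Nonempty}

/-- The euclidean pairing on `ℝ × E`. -/
def pinner (p q : ℝ × E) : ℝ := p.1 * q.1 + ⟪p.2, q.2⟫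

/-- Fréchet normal cone of a set `C ⊆ E` at `x`. -/
def frechetNC (C : Set E) (x : E) : Set E :=
  {v | ∀ ε : ℝ, 0 < ε → ∃ δ : ℝ, 0 < δ ∧
    ∀ y ∈ C, ‖y - x‖ < δ → ⟪v, y - x⟫ ≤ ε * ‖y - x‖}

/-- Limiting (Mordukhovich) normal cone of a set `C ⊆ E` at `x`. -/
def limitingNC (C : Set E) (x : E) : Set E :=
  {v | ∃ xs vs : ℕ → E, (∀ i, xs i ∈ C) ∧ (∀ i, vs i ∈ frechetNC C (xs i)) ∧
    Tendsto xs atTop (𝓝 x) ∧ Tendsto vs atTop (𝓝 v)}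

/-- Fréchet normal cone of a set `C ⊆ ℝ × E` at `z` (w.r.t. the euclidean pairing). -/
def frechetNCP (C : Set (ℝ × E)) (z : ℝ × E) : Set (ℝ × E) :=
  {v | ∀ ε : ℝ, 0 < ε → ∃ δ : ℝ, 0 < δ ∧
    ∀ y ∈ C, ‖y - z‖ < δ → pinner v (y - z) ≤ ε * ‖y - z‖}

/-- Limiting normal cone of a set `C ⊆ ℝ × E` at `z`. -/
def limitingNCP (C : Set (ℝ × E)) (z : ℝ × E) : Set (ℝ × E) :=
  {v | ∃ zs vs : ℕ → ℝ × E, (∀ i, zs i ∈ C) ∧ (∀ i, vs i ∈ frechetNCP C (zs i)) ∧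
    Tendsto zs atTop (𝓝 z) ∧ Tendsto vs atTop (𝓝 v)}

/-- The (limiting) coderivative `D*S(t,x)(u) = {a : (a,-u) ∈ N_𝒮(t,x)}`. -/
def coderiv (S : ℝ → Set E) (t : ℝ) (x : E) (u : E) : Set ℝ :=
  {a | (a, -u) ∈ limitingNCP (sgraph S) (t, x)}

/-- Asymmetric (oriented) modulus `‖D*S(t,x)|⁺ = sup {a⁺ : a ∈ D*S(t,x)(u), ‖u‖ ≤ 1}`
(with `sup ∅ = 0`). -/
noncomputable def asymMod (S : ℝ → Set E) (t : ℝ) (x : E) : ℝ≥0∞ :=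
  ⨆ (u : E) (_ : ‖u‖ ≤ 1) (a : ℝ) (_ : a ∈ coderiv S t x u), ENNReal.ofReal a

/-- Modulus `‖D*S(t,x)‖⁺ = sup {|a| : a ∈ D*S(t,x)(u), ‖u‖ ≤ 1}` (with `sup ∅ = 0`). -/
noncomputable def symMod (S : ℝ → Set E) (t : ℝ) (x : E) : ℝ≥0∞ :=
  ⨆ (u : E) (_ : ‖u‖ ≤ 1) (a : ℝ) (_ : a ∈ coderiv S t x u), ENNReal.ofReal |a|

/-- Oriented talweg function `φ↑(t) = sup_{x ∈ S(t)} ‖D*S(t,x)|⁺`. -/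
noncomputable def orientedTalweg (S : ℝ → Set E) (t : ℝ) : ℝ≥0∞ :=
  ⨆ x ∈ S t, asymMod S t x

/-- Talweg function `φ(t) = sup_{x ∈ S(t)} ‖D*S(t,x)‖⁺`. -/
noncomputable def talweg (S : ℝ → Set E) (t : ℝ) : ℝ≥0∞ :=
  ⨆ x ∈ S t, symMod S t x

/-- `M` is a `C¹`-submanifold of codimension `c` of `ℝ × E`: locally it is the zero set
of a `C¹` submersion into `ℝ^c`. -/
def IsC1SubmanifoldCodim (c : ℕ) (M : Set (ℝ × E)) : Prop :=
  ∀ z ∈ M, ∃ U : Set (ℝ × E), IsOpen U ∧ z ∈ U ∧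
    ∃ f : ℝ × E → EuclideanSpace ℝ (Fin c),
      ContDiffOn ℝ 1 f U ∧ (∀ y ∈ U, Function.Surjective ⇑(fderivWithin ℝ f U y)) ∧
      M ∩ U = {y ∈ U | f y = 0}

/-- Smooth sweeping process: the graph `𝒮` is closed, connected, and either a `C¹`
submanifold of dimension at most `dim E` (i.e. codimension at least one), or a
full-dimensional manifold with boundary whose boundary `∂𝒮` (the topological frontier)
is a `C¹` submanifold of codimension one. -/
def SmoothSweepingProcess (S : ℝ → Set E) : Prop :=
  IsClosed (sgraph S) ∧ IsConnected (sgraph S) ∧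
    ((∃ c : ℕ, 1 ≤ c ∧ IsC1SubmanifoldCodim c (sgraph S)) ∨
      (sgraph S = closure (interior (sgraph S)) ∧
        IsC1SubmanifoldCodim 1 (frontier (sgraph S))))

/-- The map `H_S(t) = ∂𝒮 ∩ ({t} × E)`. -/
def HSmap (S : ℝ → Set E) (t : ℝ) : Set (ℝ × E) :=
  frontier (sgraph S) ∩ {p : ℝ × E | p.1 = t}

/-- Continuity at `t₀` (relative to `I`) of a set-valued map for the Hausdorff–Pompeiu
metric. -/
def HPContinuousAt {X : Type*} [PseudoEMetricSpace X] (F : ℝ → Set X) (I : Set ℝ)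
    (t₀ : ℝ) : Prop :=
  ∀ ε : ℝ, 0 < ε → ∃ δ : ℝ, 0 < δ ∧ ∀ t ∈ I, |t - t₀| < δ →
    EMetric.hausdorffEdist (F t) (F t₀) < ENNReal.ofReal ε

/-- Continuity on `I` of a set-valued map for the Hausdorff–Pompeiu metric. -/
def HPContinuousOn {X : Type*} [PseudoEMetricSpace X] (F : ℝ → Set X) (I : Set ℝ) : Prop :=
  ∀ t₀ ∈ I, HPContinuousAt F I t₀

/-- `γ` is absolutely continuous on `J` (with some integrable a.e. derivative). -/
def AbsContOn (γ : ℝ → E) (J : Set ℝ) : Prop :=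
  ∃ g : ℝ → E, IntegrableOn g J ∧ ∀ s ∈ J, ∀ t ∈ J, γ t - γ s = ∫ u in s..t, g u

/-- `γ` is piecewise absolutely continuous on `I`: its discontinuities are contained in a
closed countable set `D`, and `γ` is absolutely continuous on each connected component of
`I \ D`. -/
def PiecewiseAC (γ : ℝ → E) (I : Set ℝ) : Prop :=
  ∃ D : Set ℝ, IsClosed D ∧ D.Countable ∧
    ∀ t ∈ I \ D, AbsContOn γ (connectedComponentIn (I \ D) t)

/-- `γ` (an absolutely continuous curve, with a.e. derivative `γ'`) is an orbit of the
sweeping process defined by `S` on the interval `I`:  `γ(t) ∈ S(t)` on `I` and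
`-γ̇(t) ∈ N_{S(t)}(γ(t))` for a.e. `t ∈ I`. -/
def ACOrbit (S : ℝ → Set E) (I : Set ℝ) (γ γ' : ℝ → E) : Prop :=
  (∀ t ∈ I, γ t ∈ S t) ∧ IntegrableOn γ' I ∧
    (∀ s ∈ I, ∀ t ∈ I, γ t - γ s = ∫ u in s..t, γ' u) ∧
    (∀ᵐ t ∂(volume.restrict I), -γ' t ∈ limitingNC (S t) (γ t))

/-- `γ` (with a.e. derivative `γ'`) is a piecewise absolutely continuous orbit of the
sweeping process defined by `S` on `I`. -/
def PACOrbit (S : ℝ → Set E) (I : Set ℝ) (γ γ' : ℝ → E) : Prop :=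
  ∃ D : Set ℝ, IsClosed D ∧ D.Countable ∧
    ∀ t ∈ I \ D, ACOrbit S (connectedComponentIn (I \ D) t) γ γ'

/-- Assumption (A1): from every point `(t,x) ∈ 𝒮` with `‖D*S(t,x)|⁺ < ∞` there issues an
orbit of the sweeping process. -/
def AssumptionA1 (S : ℝ → Set E) : Prop :=
  ∀ t : ℝ, ∀ x ∈ S t, asymMod S t x < ⊤ →
    ∃ δ : ℝ, 0 < δ ∧ ∃ γ γ' : ℝ → E, ACOrbit S (Ico t (t + δ)) γ γ' ∧ γ t = x

/-- Assumption (A2) at `tb`: the oriented talweg is finite just to the right of `tb`. -/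
def AssumptionA2At (S : ℝ → Set E) (tb : ℝ) : Prop :=
  ∃ δ : ℝ, 0 < δ ∧ ∀ t ∈ Ioo tb (tb + δ), orientedTalweg S t < ⊤

/-- Assumption (A3) at `tb`: `H_S` is Hausdorff–Pompeiu continuous just to the right
of `tb`. -/
def AssumptionA3At (S : ℝ → Set E) (tb : ℝ) : Prop :=
  ∃ δ : ℝ, 0 < δ ∧ HPContinuousOn (HSmap S) (Ioo tb (tb + δ))

/-- The set `𝒯` of points of the domain at which (A2) and (A3) hold. -/
def goodSet (S : ℝ → Set E) : Set ℝ :=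
  {t | t ∈ sdom S ∧ AssumptionA2At S t ∧ AssumptionA3At S t}

/-- `S` has bounded values. -/
def BoundedValues (S : ℝ → Set E) : Prop := ∀ t, Bornology.IsBounded (S t)

/-- A catching-up sequence `{(tᵢ,xᵢ)}_{i ≥ 0}` for `S`. -/
def CatchingUp (S : ℝ → Set E) (t : ℕ → ℝ) (x : ℕ → E) : Prop :=
  StrictMono t ∧ (∀ i, x i ∈ S (t i)) ∧
    ∀ i, dist (x i) (x (i + 1)) = infDist (x i) (S (t (i + 1)))

/-- A finite catching-up sequence `{(tᵢ,xᵢ)}_{i=0}^k` for `S`. -/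
def FiniteCatchingUp (S : ℝ → Set E) (k : ℕ) (t : ℕ → ℝ) (x : ℕ → E) : Prop :=
  (∀ i < k, t i < t (i + 1)) ∧ (∀ i ≤ k, x i ∈ S (t i)) ∧
    ∀ i < k, dist (x i) (x (i + 1)) = infDist (x i) (S (t (i + 1)))

/-- A piecewise catching-up sequence for `S`: blocks `{(tʲᵢ,Yʲᵢ)}_{i=0}^{k_j}`, each a
catching-up sequence, with `tʲ_{k_j} = tʲ⁺¹₀`. -/
def PiecewiseCatchingUp (S : ℝ → Set E) (k : ℕ → ℕ) (t : ℕ → ℕ → ℝ) (Y : ℕ → ℕ → E) : Prop :=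
  (∀ j, FiniteCatchingUp S (k j) (t j) (Y j)) ∧ ∀ j, t j (k j) = t (j + 1) 0

/-- Outer semicontinuity of `S` at `tb`. -/
def OuterSemicontinuousAt (S : ℝ → Set E) (tb : ℝ) : Prop :=
  ∀ (tk : ℕ → ℝ) (xk : ℕ → E) (x : E), (∀ k, xk k ∈ S (tk k)) →
    Tendsto tk atTop (𝓝 tb) → Tendsto xk atTop (𝓝 x) → x ∈ S tb

/-- Inner semicontinuity of `S` at `tb`. -/
def InnerSemicontinuousAt (S : ℝ → Set E) (tb : ℝ) : Prop :=
  ∀ x ∈ S tb, ∀ tk : ℕ → ℝ, (∀ k, tk k ∈ sdom S) → Tendsto tk atTop (𝓝 tb) →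
    Tendsto (fun k => infDist x (S (tk k))) atTop (𝓝 0)

/-- The oriented calm graphical modulus `calm↑S(t,x)`. -/
noncomputable def calmUp (S : ℝ → Set E) (t : ℝ) (x : E) : ℝ :=
  sInf {κ : ℝ | 0 < κ ∧ ∃ ε : ℝ, 0 < ε ∧ ∃ δ : ℝ, 0 < δ ∧
    ∀ t₁ ∈ Ioo t (t + ε), S t ∩ ball x δ ⊆ S t₁ + ball (0 : E) (κ * (t₁ - t))}

end Preliminaries

section Helpers1
variable {E : Type*} [NormedAddCommGroup E] [InnerProductSpace ℝ E]

lemma ACOrbit.mono_set {S : ℝ → Set E} {I J : Set ℝ} {γ γ' : ℝ → E}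
    (h : ACOrbit S I γ γ') (hJ : J ⊆ I) : ACOrbit S J γ γ' :=
  ⟨fun t ht => h.1 t (hJ ht), h.2.1.mono_set hJ,
   fun s hs t ht => h.2.2.1 s (hJ hs) t (hJ ht),
   (h.2.2.2).filter_mono (ae_mono (Measure.restrict_mono hJ le_rfl))⟩

lemma Ioc_disj_of_Ioo_disj {c d c' d' : ℝ} (h1 : c < d) (h2 : c' < d')
    (h : Disjoint (Ioo c d) (Ioo c' d')) : Disjoint (Ioc c d) (Ioc c' d') := by
  rw [Set.disjoint_left] at h ⊢
  rintro x ⟨hcx, hxd⟩ ⟨hc'x, hxd'⟩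
  have hm : max c c' < min d d' := lt_of_lt_of_le (max_lt hcx hc'x) (le_min hxd hxd')
  have h1' : c < (max c c' + min d d') / 2 :=
    lt_of_le_of_lt (le_max_left c c') (by linarith)
  have h2' : c' < (max c c' + min d d') / 2 :=
    lt_of_le_of_lt (le_max_right c c') (by linarith)
  have h3' : (max c c' + min d d') / 2 < d :=
    lt_of_lt_of_le (by linarith) (min_le_left d d')
  have h4' : (max c c' + min d d') / 2 < d' :=
    lt_of_lt_of_le (by linarith) (min_le_right d d')
  exact h ⟨h1', h3'⟩ ⟨h2', h4'⟩

end Helpers1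

/-- Theorem A, (b) ⇒ (c): uniform length control for absolutely
continuous orbits implies a uniform length bound (`M = σ(b)`) for all piecewise
absolutely continuous orbits on `[a,b]`. -/
theorem statement1 {E : Type*} [NormedAddCommGroup E] [InnerProductSpace ℝ E]
    [FiniteDimensional ℝ E] (S : ℝ → Set E)
    (hS : SmoothSweepingProcess S) (hbv : BoundedValues S) (hA1 : AssumptionA1 S)
    (a : ℝ) (ha : a ∈ goodSet S) (b : ℝ) (hab : a < b)
    (σ : ℝ → ℝ) (hσcont : ContinuousOn σ (Icc a b)) (hσmono : MonotoneOn σ (Icc a b))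
    (hσnn : ∀ t ∈ Icc a b, 0 ≤ σ t) (hσa : σ a = 0)
    (hlen : ∀ t₁ t₂ : ℝ, a ≤ t₁ → t₁ < t₂ → t₂ ≤ b →
      ∀ γ γ' : ℝ → E, ACOrbit S (Icc t₁ t₂) γ γ' →
        ∫⁻ t in Icc t₁ t₂, (‖γ' t‖₊ : ℝ≥0∞) ≤ ENNReal.ofReal (σ t₂ - σ t₁)) :
    ∃ M : ℝ, 0 < M ∧ ∀ γ γ' : ℝ → E, PACOrbit S (Icc a b) γ γ' →
      ∫⁻ t in Icc a b, (‖γ' t‖₊ : ℝ≥0∞) ≤ ENNReal.ofReal M := by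
  have hab' : a ≤ b := hab.le
  -- the clamped talweg bound function and its Stieltjes measure
  set τ : ℝ → ℝ := fun t => σ (max a (min t b)) with hτdef
  have hclamp : ∀ t, max a (min t b) ∈ Icc a b := fun t =>
    ⟨le_max_left _ _, max_le hab' (min_le_right _ _)⟩
  have hτcont : Continuous τ :=
    hσcont.comp_continuous (continuous_const.max (continuous_id.min continuous_const)) hclamp
  have hτmono : Monotone τ := fun s t hst =>
    hσmono (hclamp s) (hclamp t) (max_le_max le_rfl (min_le_min hst le_rfl))
  set F : StieltjesFunction ℝ := ⟨τ, hτmono, fun x => hτcont.continuousAt.continuousWithinAt⟩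
    with hFdef
  have hFτ : ∀ x, F x = τ x := fun x => rfl
  have hτeq : ∀ t ∈ Icc a b, τ t = σ t := by
    intro t ht
    simp only [hτdef]
    rw [min_eq_left ht.2, max_eq_right ht.1]
  have hFuniv : F.measure univ = ENNReal.ofReal (σ b) := by
    have hbot : Tendsto τ atBot (𝓝 (σ a)) := by
      apply tendsto_const_nhds.congr'
      filter_upwards [eventually_le_atBot a] with t ht
      simp only [hτdef]
      rw [min_eq_left (ht.trans hab'), max_eq_left ht]
    have htop : Tendsto τ atTop (𝓝 (σ b)) := by
      apply tendsto_const_nhds.congr'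
      filter_upwards [eventually_ge_atTop b] with t ht
      simp only [hτdef]
      rw [min_eq_right ht, max_eq_right hab']
    rw [F.measure_univ hbot htop, hσa, sub_zero]
  refine ⟨σ b + 1, by have := hσnn b (right_mem_Icc.2 hab'); linarith, ?_⟩
  rintro γ γ' ⟨D, hDcl, hDct, horb⟩
  set O : Set ℝ := Ioo a b \ D with hOdef
  have hOopen : IsOpen O := isOpen_Ioo.sdiff hDcl
  have hOsub : O ⊆ Ioo a b := diff_subset
  have hOU : O ⊆ Icc a b \ D := diff_subset_diff_left Ioo_subset_Icc_self
  -- Step 1 : reduce the integral over [a,b] to the open set O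
  have hstep1 : ∫⁻ t in Icc a b, (‖γ' t‖₊ : ℝ≥0∞) = ∫⁻ t in O, (‖γ' t‖₊ : ℝ≥0∞) := by
    apply setLIntegral_congr
    rw [ae_eq_set]
    refine ⟨measure_mono_null ?_
      (measure_union_null (s := D) (t := {a, b}) (hDct.measure_zero _)
        (((Set.finite_singleton b).insert a).measure_zero _)), ?_⟩
    · rintro x ⟨hx1, hx2⟩
      by_cases hxD : x ∈ D
      · exact Or.inl hxD
      · refine Or.inr ?_
        rcases eq_or_lt_of_le hx1.1 with h | h
        · exact Or.inl h.symm
        rcases eq_or_lt_of_le hx1.2 with h2 | h2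
        · exact Or.inr h2
        exact absurd ⟨⟨h, h2⟩, hxD⟩ hx2
    · rw [diff_eq_empty.2 (hOsub.trans Ioo_subset_Icc_self), measure_empty]
  -- Step 2 : connected components of O
  set P : Set (Set ℝ) := {C | ∃ t ∈ O, C = connectedComponentIn O t} with hPdef
  have hPopen : ∀ C ∈ P, IsOpen C := by
    rintro C ⟨t, ht, rfl⟩; exact hOopen.connectedComponentIn
  have hPsub : ∀ C ∈ P, C ⊆ O := by
    rintro C ⟨t, ht, rfl⟩; exact connectedComponentIn_subset _ _
  have hPdisj : P.Pairwise (Disjoint · ·) := by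
    rintro C ⟨t, ht, rfl⟩ C' ⟨t', ht', rfl⟩ hne
    rw [Set.disjoint_left]
    intro z hz hz'
    exact hne ((connectedComponentIn_eq hz).trans (connectedComponentIn_eq hz').symm)
  have hPunion : ⋃₀ P = O := by
    apply subset_antisymm (sUnion_subset hPsub)
    intro t ht
    exact ⟨connectedComponentIn O t, ⟨t, ht, rfl⟩, mem_connectedComponentIn ht⟩
  have hPcount : P.Countable := by
    obtain ⟨T, hTc, hTP, hTU⟩ := TopologicalSpace.isOpen_sUnion_countable P hPopen
    refine hTc.mono ?_
    rintro C ⟨t, ht, rfl⟩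
    have htm : t ∈ ⋃₀ T := by rw [hTU, hPunion]; exact ht
    obtain ⟨C', hC'T, htC'⟩ := htm
    obtain ⟨t', ht', rfl⟩ := hTP hC'T
    rwa [← connectedComponentIn_eq htC']
  -- Step 3 : per-component analysis
  have hcomp : ∀ C ∈ P, sInf C < sSup C ∧ a ≤ sInf C ∧ sSup C ≤ b ∧
      C = Ioo (sInf C) (sSup C) ∧
      ∫⁻ t in C, (‖γ' t‖₊ : ℝ≥0∞) ≤ ENNReal.ofReal (σ (sSup C) - σ (sInf C)) := by
    rintro C ⟨t₀, ht₀, rfl⟩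
    set C := connectedComponentIn O t₀ with hCdef
    have ht₀C : t₀ ∈ C := mem_connectedComponentIn ht₀
    have hCO : C ⊆ O := connectedComponentIn_subset _ _
    have hCab : C ⊆ Ioo a b := hCO.trans hOsub
    have hCopen : IsOpen C := hOopen.connectedComponentIn
    have hbdd : BddBelow C := BddBelow.mono hCab bddBelow_Ioo
    have hbdd' : BddAbove C := BddAbove.mono hCab bddAbove_Ioo
    have hne : C.Nonempty := ⟨t₀, ht₀C⟩
    set c := sInf C with hcdef
    set d := sSup C with hddef
    obtain ⟨ε, hε, hball⟩ := Metric.isOpen_iff.1 hCopen t₀ ht₀C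
    have hb2 : t₀ - ε / 2 ∈ C := by
      apply hball
      rw [Metric.mem_ball, Real.dist_eq, abs_lt]
      constructor <;> linarith
    have hb3 : t₀ + ε / 2 ∈ C := by
      apply hball
      rw [Metric.mem_ball, Real.dist_eq, abs_lt]
      constructor <;> linarith
    have hcd : c < d :=
      lt_of_le_of_lt (csInf_le hbdd hb2)
        (lt_of_lt_of_le (by linarith) (le_csSup hbdd' hb3))
    have hac : a ≤ c := le_csInf hne fun x hx => (hCab hx).1.le
    have hdb : d ≤ b := csSup_le hne fun x hx => (hCab hx).2.le
    have hIoo : C = Ioo c d := by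
      apply subset_antisymm
      · intro x hx
        refine ⟨lt_of_le_of_ne (csInf_le hbdd hx) ?_, lt_of_le_of_ne (le_csSup hbdd' hx) ?_⟩
        · intro hxc
          obtain ⟨ε', hε', hb'⟩ := Metric.isOpen_iff.1 hCopen x hx
          have hmem : x - ε' / 2 ∈ C := by
            apply hb'
            rw [Metric.mem_ball, Real.dist_eq, abs_lt]
            constructor <;> linarith
          have := csInf_le hbdd hmem
          rw [← hcdef, hxc] at this
          linarith
        · intro hxd
          obtain ⟨ε', hε', hb'⟩ := Metric.isOpen_iff.1 hCopen x hx
          have hmem : x + ε' / 2 ∈ C := by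
            apply hb'
            rw [Metric.mem_ball, Real.dist_eq, abs_lt]
            constructor <;> linarith
          have := le_csSup hbdd' hmem
          rw [← hddef, ← hxd] at this
          linarith
      · intro x hx
        obtain ⟨p, hp, hpx⟩ := exists_lt_of_csInf_lt hne hx.1
        obtain ⟨q, hq, hxq⟩ := exists_lt_of_lt_csSup hne hx.2
        have hoc : OrdConnected C := isPreconnected_connectedComponentIn.ordConnected
        exact hoc.out hp hq ⟨hpx.le, hxq.le⟩
    refine ⟨hcd, hac, hdb, hIoo, ?_⟩
    -- the orbit restricted to C
    have hCU : C ⊆ connectedComponentIn (Icc a b \ D) t₀ := connectedComponentIn_mono t₀ hOU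
    have horbC : ACOrbit S C γ γ' := (horb t₀ (hOU ht₀)).mono_set hCU
    have hmeas : AEMeasurable (fun t => (‖γ' t‖₊ : ℝ≥0∞)) (volume.restrict C) :=
      horbC.2.1.aestronglyMeasurable.enorm
    set g := hmeas.mk _ with hgdef
    have hgmeas : Measurable g := hmeas.measurable_mk
    have hfg : (fun t => (‖γ' t‖₊ : ℝ≥0∞)) =ᵐ[volume.restrict C] g := hmeas.ae_eq_mk
    have hCms : MeasurableSet C := hCopen.measurableSet
    set e := d - c with hedef
    have hepos : 0 < e := by simp only [hedef]; linarith
    set A : ℕ → Set ℝ := fun n => Icc (c + e / (n + 3 : ℝ)) (d - e / (n + 3 : ℝ)) with hAdef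
    have hq : ∀ n : ℕ, 0 < e / ((n : ℝ) + 3) := fun n => div_pos hepos (by positivity)
    have hqe : ∀ n : ℕ, e / ((n : ℝ) + 3) ≤ e / 3 := fun n =>
      div_le_div_of_nonneg_left hepos.le (by norm_num) (by linarith [Nat.cast_nonneg (α := ℝ) n])
    have hAC : ∀ n, A n ⊆ Ioo c d := by
      intro n x hx
      have h1 := hq n
      exact ⟨lt_of_lt_of_le (by linarith) hx.1, lt_of_le_of_lt hx.2 (by linarith)⟩
    have hAmono : Monotone A := by
      intro n m hnm
      have h1 : e / ((m : ℝ) + 3) ≤ e / ((n : ℝ) + 3) :=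
        div_le_div_of_nonneg_left hepos.le (by positivity)
          (by have : (n : ℝ) ≤ (m : ℝ) := Nat.cast_le.2 hnm; linarith)
      exact Icc_subset_Icc (by linarith) (by linarith)
    have hAU : (⋃ n, A n) = Ioo c d := by
      apply subset_antisymm (iUnion_subset hAC)
      intro x hx
      have hr : 0 < min (x - c) (d - x) := lt_min (by linarith [hx.1]) (by linarith [hx.2])
      obtain ⟨n, hn⟩ := exists_nat_gt (e / min (x - c) (d - x))
      have hn3 : e / ((n : ℝ) + 3) < min (x - c) (d - x) := by
        rw [div_lt_iff₀ (by positivity)]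
        have h0 : e / min (x - c) (d - x) < (n : ℝ) + 3 := by
          linarith [Nat.cast_nonneg (α := ℝ) n]
        rw [div_lt_iff₀ hr] at h0
        linarith
      refine mem_iUnion.2 ⟨n, ⟨?_, ?_⟩⟩
      · have := hn3.le.trans (min_le_left _ _); linarith
      · have := hn3.le.trans (min_le_right _ _); linarith
    calc ∫⁻ t in C, (‖γ' t‖₊ : ℝ≥0∞) = ∫⁻ t in C, g t := lintegral_congr_ae hfg
      _ = (volume.withDensity g) C := (withDensity_apply g hCms).symm
      _ = (volume.withDensity g) (⋃ n, A n) := by rw [hAU, ← hIoo]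
      _ = ⨆ n, (volume.withDensity g) (A n) := hAmono.directed_le.measure_iUnion
      _ ≤ ENNReal.ofReal (σ d - σ c) := by
          refine iSup_le fun n => ?_
          have hsub : A n ⊆ C := by rw [hIoo]; exact hAC n
          have hlt : c + e / ((n : ℝ) + 3) < d - e / ((n : ℝ) + 3) := by
            have := hqe n; simp only [hedef] at *; linarith
          have hcn : a ≤ c + e / ((n : ℝ) + 3) := by linarith [hq n]
          have hdn : d - e / ((n : ℝ) + 3) ≤ b := by linarith [hq n]
          have horbA : ACOrbit S (Icc (c + e / ((n : ℝ) + 3)) (d - e / ((n : ℝ) + 3))) γ γ' :=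
            horbC.mono_set hsub
          have h3 := hlen _ _ hcn hlt hdn γ γ' horbA
          have hfgA : (fun t => (‖γ' t‖₊ : ℝ≥0∞)) =ᵐ[volume.restrict (A n)] g :=
            ae_restrict_of_ae_restrict_of_subset hsub hfg
          have h2 : ∫⁻ t in A n, g t = ∫⁻ t in A n, (‖γ' t‖₊ : ℝ≥0∞) :=
            lintegral_congr_ae hfgA.symm
          rw [withDensity_apply g measurableSet_Icc]
          refine le_trans (le_of_eq ?_) (h3.trans (ENNReal.ofReal_le_ofReal ?_))
          · exact h2
          · have hm1 : σ c ≤ σ (c + e / ((n : ℝ) + 3)) :=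
              hσmono ⟨hac, by linarith⟩ ⟨hcn, by linarith⟩ (by linarith [hq n])
            have hm2 : σ (d - e / ((n : ℝ) + 3)) ≤ σ d :=
              hσmono ⟨by linarith, hdn⟩ ⟨by linarith, hdb⟩ (by linarith [hq n])
            linarith
  -- Step 4 : summation over the components
  have hcount := hPcount.to_subtype
  calc ∫⁻ t in Icc a b, (‖γ' t‖₊ : ℝ≥0∞) = ∫⁻ t in O, (‖γ' t‖₊ : ℝ≥0∞) := hstep1
    _ = ∫⁻ t in ⋃ C : P, (C : Set ℝ), (‖γ' t‖₊ : ℝ≥0∞) := by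
        rw [← hPunion, sUnion_eq_iUnion]
    _ ≤ ∑' C : P, ∫⁻ t in (C : Set ℝ), (‖γ' t‖₊ : ℝ≥0∞) := lintegral_iUnion_le _ _
    _ ≤ ∑' C : P, F.measure (Ioc (sInf (C : Set ℝ)) (sSup (C : Set ℝ))) := by
        refine ENNReal.tsum_le_tsum fun C => ?_
        obtain ⟨h1, h2, h3, h4, h5⟩ := hcomp C C.2
        refine h5.trans (le_of_eq ?_)
        rw [F.measure_Ioc, hFτ, hFτ, hτeq _ ⟨h2.trans h1.le, h3⟩, hτeq _ ⟨h2, h1.le.trans h3⟩]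
    _ = F.measure (⋃ C : P, Ioc (sInf (C : Set ℝ)) (sSup (C : Set ℝ))) := by
        refine (measure_iUnion ?_ fun C => measurableSet_Ioc).symm
        intro C C' hne
        obtain ⟨h1, -, -, h4, -⟩ := hcomp C C.2
        obtain ⟨h1', -, -, h4', -⟩ := hcomp C' C'.2
        have hd := hPdisj C.2 C'.2 (Subtype.coe_injective.ne hne)
        rw [h4, h4'] at hd
        exact Ioc_disj_of_Ioo_disj h1 h1' hd
    _ ≤ F.measure univ := measure_mono (subset_univ _)
    _ = ENNReal.ofReal (σ b) := hFuniv
    _ ≤ ENNReal.ofReal (σ b + 1) := ENNReal.ofReal_le_ofReal (by linarith)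
end

section
/- Let S : ℝ ⇒ ℝⁿ be a smooth sweeping process with bounded values satisfying assumption (A1), and let a ∈ 𝒯. Suppose there exists b > a such that the oriented talweg function φ↑ is integrable on (a,b). Then there exist b' ∈ (a,b], ρ > 0 and a homeomorphism Ψ : [0,ρ] → [a,b'], which is a C¹-diffeomorphism from (0,ρ) onto (a,b') with Ψ'(r) > 0 for all r ∈ (0,ρ), such that ‖D*(S∘Ψ)(r,x)|⁺ ≤ 1 for all r ∈ (0,ρ) and all x ∈ S(Ψ(r)). -/
open Set Metric Filter MeasureTheory
open scoped ENNReal RealInnerProductSpace Topology Pointwise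

set_option linter.unusedSectionVars false

section AuxLemmas

variable {E : Type*} [NormedAddCommGroup E] [InnerProductSpace ℝ E]

lemma mem_sgraph_iff {S : ℝ → Set E} {p : ℝ × E} : p ∈ sgraph S ↔ p.2 ∈ S p.1 := Iff.rfl

lemma pinner_smul_left (c : ℝ) (p q : ℝ × E) : pinner (c • p) q = c * pinner p q := by
  simp [pinner, Prod.smul_fst, Prod.smul_snd, real_inner_smul_left]
  ring

lemma frechetNCP_smul {C : Set (ℝ × E)} {z v : ℝ × E} (hv : v ∈ frechetNCP C z)
    {c : ℝ} (hc : 0 < c) : c • v ∈ frechetNCP C z := by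
  intro ε hε
  obtain ⟨δ, hδ, h⟩ := hv (ε / c) (div_pos hε hc)
  refine ⟨δ, hδ, fun y hy hyd => ?_⟩
  have := h y hy hyd
  rw [pinner_smul_left]
  calc c * pinner v (y - z) ≤ c * (ε / c * ‖y - z‖) := by
        exact mul_le_mul_of_nonneg_left this hc.le
    _ = ε * ‖y - z‖ := by field_simp

lemma limitingNCP_smul {C : Set (ℝ × E)} {z v : ℝ × E} (hv : v ∈ limitingNCP C z)
    {c : ℝ} (hc : 0 < c) : c • v ∈ limitingNCP C z := by
  obtain ⟨zs, vs, hzs, hvs, hzt, hvt⟩ := hv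
  exact ⟨zs, fun i => c • vs i, hzs, fun i => frechetNCP_smul (hvs i) hc, hzt,
    (continuous_const_smul c).continuousAt.tendsto.comp hvt⟩

lemma limitingNCP_limit {C : Set (ℝ × E)} {z : ℝ × E} {zk vk : ℕ → ℝ × E} {v : ℝ × E}
    (hv : ∀ i, vk i ∈ limitingNCP C (zk i)) (hz : Tendsto zk atTop (𝓝 z))
    (hvt : Tendsto vk atTop (𝓝 v)) : v ∈ limitingNCP C z := by
  have key : ∀ i : ℕ, ∃ p : (ℝ × E) × (ℝ × E), p.1 ∈ C ∧ p.2 ∈ frechetNCP C p.1 ∧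
      dist p.1 (zk i) < 1 / (i + 1) ∧ dist p.2 (vk i) < 1 / (i + 1) := by
    intro i
    obtain ⟨zs, vs, hzs, hvs, hzt, hvt'⟩ := hv i
    have hpos : (0:ℝ) < 1 / (i + 1) := by positivity
    have h1 : ∀ᶠ j in atTop, dist (zs j) (zk i) < 1 / (i + 1) :=
      (tendsto_iff_dist_tendsto_zero.1 hzt).eventually (Filter.Tendsto.eventually_lt_const hpos
        tendsto_id) |>.mono (fun j hj => hj)
    have h2 : ∀ᶠ j in atTop, dist (vs j) (vk i) < 1 / (i + 1) :=
      (tendsto_iff_dist_tendsto_zero.1 hvt').eventually (Filter.Tendsto.eventually_lt_const hpos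
        tendsto_id) |>.mono (fun j hj => hj)
    obtain ⟨j, hj1, hj2⟩ := (h1.and h2).exists
    exact ⟨⟨zs j, vs j⟩, hzs j, hvs j, hj1, hj2⟩
  choose p hp1 hp2 hp3 hp4 using key
  have hrec : Tendsto (fun i : ℕ => 1 / ((i : ℝ) + 1)) atTop (𝓝 0) :=
    tendsto_one_div_add_atTop_nhds_zero_nat
  refine ⟨fun i => (p i).1, fun i => (p i).2, hp1, hp2, ?_, ?_⟩
  · rw [tendsto_iff_dist_tendsto_zero]
    refine squeeze_zero (fun i => dist_nonneg) (fun i => ?_)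
      (by simpa using hrec.add (tendsto_iff_dist_tendsto_zero.1 hz))
    calc dist (p i).1 z ≤ dist (p i).1 (zk i) + dist (zk i) z := dist_triangle _ _ _
      _ ≤ 1 / (i + 1) + dist (zk i) z := by linarith [hp3 i]
      _ = (↑i + 1)⁻¹ + dist (zk i) z := by rw [one_div]
  · rw [tendsto_iff_dist_tendsto_zero]
    refine squeeze_zero (fun i => dist_nonneg) (fun i => ?_)
      (by simpa using hrec.add (tendsto_iff_dist_tendsto_zero.1 hvt))
    calc dist (p i).2 v ≤ dist (p i).2 (vk i) + dist (vk i) v := dist_triangle _ _ _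
      _ ≤ 1 / (i + 1) + dist (vk i) v := by linarith [hp4 i]
      _ = (↑i + 1)⁻¹ + dist (vk i) v := by rw [one_div]

lemma le_asymMod {S : ℝ → Set E} {t : ℝ} {x u : E} {α : ℝ} (hu : ‖u‖ ≤ 1)
    (hα : α ∈ coderiv S t x u) : ENNReal.ofReal α ≤ asymMod S t x :=
  le_iSup_of_le u (le_iSup_of_le hu (le_iSup_of_le α (le_iSup_of_le hα le_rfl)))

lemma asymMod_le_talweg {S : ℝ → Set E} {t : ℝ} {x : E} (hx : x ∈ S t) :
    asymMod S t x ≤ orientedTalweg S t :=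
  le_iSup_of_le x (le_iSup_of_le hx le_rfl)

lemma asymMod_eq_top {S : ℝ → Set E} {t : ℝ} {x : E}
    (h : ((1:ℝ), (0:E)) ∈ limitingNCP (sgraph S) (t, x)) : asymMod S t x = ⊤ := by
  by_contra hne
  have hlt : asymMod S t x < ⊤ := lt_top_iff_ne_top.2 hne
  obtain ⟨n, hn⟩ := exists_nat_gt (asymMod S t x).toReal
  have hmem : ((n : ℝ) + 1) ∈ coderiv S t x 0 := by
    have := limitingNCP_smul (E := E) h (c := (n : ℝ) + 1) (by positivity)
    simpa [coderiv, Prod.smul_mk, mul_one] using this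
  have hle : ENNReal.ofReal ((n : ℝ) + 1) ≤ asymMod S t x :=
    le_asymMod (by simp) hmem
  have h2 := ENNReal.toReal_mono hne hle
  rw [ENNReal.toReal_ofReal (by positivity : (0:ℝ) ≤ (n:ℝ)+1)] at h2
  linarith

lemma asymMod_le_one {S : ℝ → Set E} {t : ℝ} {x : E}
    (h : ∀ u : E, ‖u‖ ≤ 1 → ∀ α ∈ coderiv S t x u, α ≤ 1) : asymMod S t x ≤ 1 := by
  refine iSup_le fun u => iSup_le fun hu => iSup_le fun α => iSup_le fun hα => ?_
  have : ENNReal.ofReal α ≤ ENNReal.ofReal 1 := ENNReal.ofReal_le_ofReal (h u hu α hα)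
  simpa using this

end AuxLemmas

section SliceBound

variable {E : Type*} [NormedAddCommGroup E] [InnerProductSpace ℝ E]

lemma isClosed_slice {S : ℝ → Set E} (hcl : IsClosed (sgraph S)) (t : ℝ) :
    IsClosed (S t) := by
  have : S t = (fun x : E => (t, x)) ⁻¹' sgraph S := rfl
  rw [this]
  exact hcl.preimage (Continuous.prodMk_right t)

lemma isCompact_slice [FiniteDimensional ℝ E] {S : ℝ → Set E} (hcl : IsClosed (sgraph S))
    (hbv : BoundedValues S) (t : ℝ) : IsCompact (S t) :=
  Metric.isCompact_of_isClosed_isBounded (isClosed_slice hcl t) (hbv t)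

lemma maxnorm_mem_frontier {S : ℝ → Set E} {t : ℝ} {x : E} (hx : x ∈ S t)
    (hmax : ∀ y ∈ S t, ‖y‖ ≤ ‖x‖) (hpos : 0 < ‖x‖) : (t, x) ∈ frontier (sgraph S) := by
  rw [frontier, mem_diff]
  refine ⟨subset_closure hx, fun hint => ?_⟩
  rw [mem_interior_iff_mem_nhds, Metric.mem_nhds_iff] at hint
  obtain ⟨ε, hε, hball⟩ := hint
  set c : ℝ := ε / (2 * ‖x‖) with hc
  have hcpos : 0 < c := by positivity
  have hq : (t, x + c • x) ∈ sgraph S := by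
    apply hball
    rw [Metric.mem_ball, Prod.dist_eq]
    have h1 : dist (x + c • x) x = c * ‖x‖ := by
      rw [dist_eq_norm]
      simp [norm_smul, abs_of_pos hcpos]
    have h2 : c * ‖x‖ = ε / 2 := by
      rw [hc]; field_simp
    rw [dist_self, h1, h2, max_eq_right (by positivity : (0:ℝ) ≤ ε/2)]
    linarith
  have hmem : x + c • x ∈ S t := hq
  have hnorm : ‖x + c • x‖ = (1 + c) * ‖x‖ := by
    have : x + c • x = (1 + c) • x := by rw [add_smul, one_smul]
    rw [this, norm_smul, Real.norm_eq_abs, abs_of_pos (by linarith)]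
  have := hmax _ hmem
  rw [hnorm] at this
  nlinarith

lemma slice_bound [FiniteDimensional ℝ E] {S : ℝ → Set E} (hcl : IsClosed (sgraph S))
    (hbv : BoundedValues S) {I : Set ℝ} {t₀ : ℝ} (hHP : HPContinuousAt (HSmap S) I t₀) :
    ∃ η : ℝ, 0 < η ∧ ∃ R : ℝ, 0 ≤ R ∧ ∀ t ∈ I, |t - t₀| < η → ∀ x ∈ S t, ‖x‖ ≤ R := by
  obtain ⟨η, hη, hHaus⟩ := hHP 1 one_pos
  obtain ⟨R₀, hR₀⟩ := (hbv t₀).exists_norm_le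
  refine ⟨η, hη, max R₀ 0 + 1, by positivity, fun t ht htη x hx => ?_⟩
  obtain ⟨xs, hxs, hxsmax'⟩ := (isCompact_slice hcl hbv t).exists_isMaxOn ⟨x, hx⟩
    continuous_norm.continuousOn
  have hxsmax : ∀ y ∈ S t, ‖y‖ ≤ ‖xs‖ := fun y hy => hxsmax' hy
  rcases eq_or_lt_of_le (norm_nonneg xs) with h0 | h0
  · have := hxsmax x hx
    rw [← h0] at this
    have : ‖x‖ = 0 := le_antisymm this (norm_nonneg x)
    rw [this]; positivity
  · have hfr : (t, xs) ∈ HSmap S t :=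
      ⟨maxnorm_mem_frontier hxs hxsmax h0, rfl⟩
    have hle : EMetric.infEdist (t, xs) (HSmap S t₀) < ENNReal.ofReal 1 :=
      lt_of_le_of_lt (EMetric.infEdist_le_hausdorffEdist_of_mem hfr) (hHaus t ht htη)
    obtain ⟨q, hq, hqd⟩ := EMetric.infEdist_lt_iff.1 hle
    have hq2 : q.2 ∈ S t₀ := by
      have h1 : q ∈ sgraph S := by
        have := hq.1
        rw [frontier, mem_diff] at this
        exact (IsClosed.closure_eq hcl) ▸ this.1
      have h2 : q.1 = t₀ := hq.2
      rw [mem_sgraph_iff, h2] at h1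
      exact h1
    have hdist : dist xs q.2 < 1 := by
      have := (edist_lt_ofReal).1 hqd
      rw [Prod.dist_eq] at this
      exact lt_of_le_of_lt (le_max_right _ _) this
    have h5 : ‖xs‖ ≤ ‖q.2‖ + 1 := by
      have h3 : ‖xs‖ - ‖q.2‖ ≤ dist xs q.2 := by
        rw [dist_eq_norm]; exact norm_sub_norm_le _ _
      linarith
    have h4 := hR₀ q.2 hq2
    calc ‖x‖ ≤ ‖xs‖ := hxsmax x hx
      _ ≤ ‖q.2‖ + 1 := h5
      _ ≤ max R₀ 0 + 1 := by
        have : ‖q.2‖ ≤ max R₀ 0 := le_trans h4 (le_max_left _ _)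
        linarith

end SliceBound

section TalwegUSC

variable {E : Type*} [NormedAddCommGroup E] [InnerProductSpace ℝ E]

set_option maxHeartbeats 1000000 in
lemma talweg_usc [FiniteDimensional ℝ E] {S : ℝ → Set E} (hcl : IsClosed (sgraph S))
    (hbv : BoundedValues S) {I : Set ℝ}
    (hfin : ∀ t ∈ I, orientedTalweg S t < ⊤)
    (hHP : ∀ t₀ ∈ I, HPContinuousAt (HSmap S) I t₀) :
    UpperSemicontinuousOn (fun t => max (orientedTalweg S t).toReal 1) I := by
  intro t₀ ht₀ c hc
  set H : ℝ → ℝ := fun t => max (orientedTalweg S t).toReal 1 with hHdef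
  by_contra hcon
  rw [Filter.not_eventually] at hcon
  obtain ⟨ts, hts, htsc⟩ := Filter.frequently_iff_seq_forall.1 hcon
  obtain ⟨hts0, htsI⟩ := tendsto_nhdsWithin_iff.1 hts
  have hc1 : (1:ℝ) < c := lt_of_le_of_lt (le_max_right _ _) hc
  set c'' : ℝ := (H t₀ + c) / 2 with hc''def
  have hHt₀1 : (1:ℝ) ≤ H t₀ := le_max_right _ _
  have hc''1 : 1 < c'' := by rw [hc''def]; simp only [hHdef] at hc ⊢; linarith
  have hc''lt : c'' < c := by rw [hc''def]; linarith
  have hHc'' : H t₀ < c'' := by rw [hc''def]; linarith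
  obtain ⟨η, hη, R, hR, hbd⟩ := slice_bound hcl hbv (hHP t₀ ht₀)
  have hmem : ∀ᶠ n in atTop, ts n ∈ I ∧ |ts n - t₀| < η := by
    refine htsI.and ?_
    have := Metric.tendsto_nhds.1 hts0 η hη
    simpa [Real.dist_eq] using this
  obtain ⟨N, hN⟩ := Filter.eventually_atTop.1 hmem
  have key : ∀ n : ℕ, ∃ x ∈ S (ts (n + N)), ∃ u : E, ‖u‖ ≤ 1 ∧
      ∃ α : ℝ, α ∈ coderiv S (ts (n + N)) x u ∧ c'' < α := by
    intro n
    have h1 : ts (n + N) ∈ I := (hN (n + N) (Nat.le_add_left _ _)).1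
    have h2 : ¬ H (ts (n + N)) < c := htsc (n + N)
    push_neg at h2
    have hfin' := hfin _ h1
    have htoR : c ≤ (orientedTalweg S (ts (n + N))).toReal := by
      rcases max_cases (orientedTalweg S (ts (n + N))).toReal 1 with ⟨he, _⟩ | ⟨he, hle⟩
      · rw [hHdef] at h2; simpa [he] using h2
      · exfalso; rw [hHdef] at h2; simp only [he] at h2; linarith
    have h3 : ENNReal.ofReal c'' < orientedTalweg S (ts (n + N)) := by
      have : ENNReal.ofReal c'' < ENNReal.ofReal (orientedTalweg S (ts (n + N))).toReal := by
        rw [ENNReal.ofReal_lt_ofReal_iff_of_nonneg (by linarith)]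
        linarith
      rwa [ENNReal.ofReal_toReal hfin'.ne] at this
    rw [orientedTalweg, lt_iSup_iff] at h3
    obtain ⟨x, h3⟩ := h3
    rw [lt_iSup_iff] at h3
    obtain ⟨hx, h3⟩ := h3
    rw [asymMod, lt_iSup_iff] at h3
    obtain ⟨u, h3⟩ := h3
    rw [lt_iSup_iff] at h3
    obtain ⟨hu, h3⟩ := h3
    rw [lt_iSup_iff] at h3
    obtain ⟨α, h3⟩ := h3
    rw [lt_iSup_iff] at h3
    obtain ⟨hα, h3⟩ := h3
    refine ⟨x, hx, u, hu, α, hα, ?_⟩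
    rw [ENNReal.ofReal_lt_ofReal_iff_of_nonneg (by linarith)] at h3
    exact h3
  choose x hxS u hu α hα hαc using key
  have hα1 : ∀ n, (1:ℝ) < α n := fun n => lt_trans hc''1 (hαc n)
  have hα0 : ∀ n, (0:ℝ) < α n := fun n => lt_trans one_pos (hα1 n)
  set p : ℕ → ℝ × E × E := fun n => (1 / α n, u n, x n) with hpdef
  have hpK : ∀ n, p n ∈ (Icc (0:ℝ) 1) ×ˢ ((closedBall (0:E) 1) ×ˢ (closedBall (0:E) R)) := by
    intro n
    refine ⟨⟨(div_pos one_pos (hα0 n)).le, ?_⟩, mem_closedBall_zero_iff.2 (hu n), mem_closedBall_zero_iff.2 ?_⟩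
    · rw [div_le_one (hα0 n)]; linarith [hα1 n]
    · exact hbd _ (hN (n + N) (Nat.le_add_left _ _)).1 (hN (n + N) (Nat.le_add_left _ _)).2
        _ (hxS n)
  have hK : IsCompact ((Icc (0:ℝ) 1) ×ˢ ((closedBall (0:E) 1) ×ˢ (closedBall (0:E) R))) :=
    isCompact_Icc.prod ((isCompact_closedBall _ _).prod (isCompact_closedBall _ _))
  obtain ⟨⟨β, ustar, xstar⟩, haK, φ, hφ, hconv⟩ := hK.tendsto_subseq hpK
  have hβmem : β ∈ Icc (0:ℝ) 1 := haK.1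
  have hustar : ‖ustar‖ ≤ 1 := mem_closedBall_zero_iff.1 haK.2.1
  have hβt : Tendsto (fun n => 1 / α (φ n)) atTop (𝓝 β) :=
    (continuous_fst.tendsto _).comp hconv
  have hut : Tendsto (fun n => u (φ n)) atTop (𝓝 ustar) :=
    ((continuous_fst.comp continuous_snd).tendsto _).comp hconv
  have hxt : Tendsto (fun n => x (φ n)) atTop (𝓝 xstar) :=
    ((continuous_snd.comp continuous_snd).tendsto _).comp hconv
  have hidx : Tendsto (fun n => φ n + N) atTop atTop :=
    tendsto_atTop_mono (fun n => Nat.le_add_right (φ n) N) hφ.tendsto_atTop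
  have htt : Tendsto (fun n => ts (φ n + N)) atTop (𝓝 t₀) := hts0.comp hidx
  have hzt : Tendsto (fun n => ((ts (φ n + N) : ℝ), x (φ n))) atTop (𝓝 (t₀, xstar)) :=
    htt.prodMk_nhds hxt
  have hxstarS : xstar ∈ S t₀ := by
    have := hcl.mem_of_tendsto hzt (Filter.Eventually.of_forall fun n => hxS (φ n))
    exact this
  have hW : ∀ n, ((1:ℝ), -((1 / α (φ n)) • u (φ n))) ∈
      limitingNCP (sgraph S) (ts (φ n + N), x (φ n)) := by
    intro n
    have hmem' : ((α (φ n) : ℝ), -(u (φ n))) ∈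
        limitingNCP (sgraph S) (ts (φ n + N), x (φ n)) := hα (φ n)
    have := limitingNCP_smul hmem' (c := 1 / α (φ n)) (div_pos one_pos (hα0 (φ n)))
    have hne : α (φ n) ≠ 0 := ne_of_gt (hα0 (φ n))
    have heq : (1 / α (φ n)) • ((α (φ n) : ℝ), -(u (φ n))) =
        ((1:ℝ), -((1 / α (φ n)) • u (φ n))) := by
      rw [Prod.smul_mk, smul_neg, smul_eq_mul, one_div, inv_mul_cancel₀ hne]
    rwa [heq] at this
  have hWt : Tendsto (fun n => (((1:ℝ)), -((1 / α (φ n)) • u (φ n)))) atTop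
      (𝓝 ((1:ℝ), -(β • ustar))) :=
    tendsto_const_nhds.prodMk_nhds ((hβt.smul hut).neg)
  have hlim : ((1:ℝ), -(β • ustar)) ∈ limitingNCP (sgraph S) (t₀, xstar) :=
    limitingNCP_limit (fun n => hW n) hzt hWt
  rcases eq_or_lt_of_le hβmem.1 with hβ0 | hβpos
  · -- β = 0 : contradiction with finiteness
    have : ((1:ℝ), (0:E)) ∈ limitingNCP (sgraph S) (t₀, xstar) := by
      rw [← hβ0] at hlim
      simpa using hlim
    have htop : asymMod S t₀ xstar = ⊤ := asymMod_eq_top this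
    have := lt_of_le_of_lt (asymMod_le_talweg hxstarS) (hfin t₀ ht₀)
    rw [htop] at this
    exact absurd this (lt_irrefl _)
  · -- β > 0
    have hscale := limitingNCP_smul hlim (c := 1 / β) (by positivity)
    have hβne : β ≠ 0 := ne_of_gt hβpos
    have heq : (1 / β) • (((1:ℝ)), -(β • ustar)) = ((1 / β : ℝ), -ustar) := by
      rw [Prod.smul_mk, smul_neg, smul_smul, smul_eq_mul, mul_one, one_div,
        inv_mul_cancel₀ hβne, one_smul]
    rw [heq] at hscale
    have hcod : (1 / β) ∈ coderiv S t₀ xstar ustar := hscale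
    have hbound : ENNReal.ofReal (1 / β) ≤ orientedTalweg S t₀ :=
      le_trans (le_asymMod hustar hcod) (asymMod_le_talweg hxstarS)
    have hβle : β ≤ 1 / c'' := by
      refine le_of_tendsto hβt (Filter.Eventually.of_forall fun n => ?_)
      exact one_div_le_one_div_of_le (by linarith) (hαc (φ n)).le
    have h1β : c'' ≤ 1 / β := by
      rw [le_div_iff₀ hβpos]
      calc c'' * β ≤ c'' * (1 / c'') := by
            exact mul_le_mul_of_nonneg_left hβle (by linarith)
        _ = 1 := by field_simp
    have hfin₀ := hfin t₀ ht₀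
    have : c'' ≤ (orientedTalweg S t₀).toReal := by
      have h5 := ENNReal.toReal_mono hfin₀.ne hbound
      rw [ENNReal.toReal_ofReal (by positivity)] at h5
      linarith
    have : c'' ≤ H t₀ := le_trans this (le_max_left _ _)
    linarith

end TalwegUSC

section Insertion

lemma usc_open_lt {J : Set ℝ} (hJ : IsOpen J) {H : ℝ → ℝ} (hH : UpperSemicontinuousOn H J)
    (q : ℝ) : IsOpen {t | t ∈ J ∧ H t < q} := by
  rw [isOpen_iff_mem_nhds]
  rintro t ⟨htJ, htq⟩
  have h1 := hH t htJ q htq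
  rw [nhdsWithin_eq_nhds.2 (hJ.mem_nhds htJ)] at h1
  filter_upwards [h1, hJ.mem_nhds htJ] with s hs1 hs2
  exact ⟨hs2, hs1⟩

lemma indicator_measurable {J : Set ℝ} (hJ : IsOpen J) {H : ℝ → ℝ}
    (hH : UpperSemicontinuousOn H J) :
    Measurable (Set.indicator J H) := by
  apply measurable_of_Iio
  intro c
  have hset : (Set.indicator J H) ⁻¹' (Iio c) =
      {t | t ∈ J ∧ H t < c} ∪ (if (0:ℝ) < c then Jᶜ else ∅) := by
    ext t
    by_cases htJ : t ∈ J <;> by_cases h0c : (0:ℝ) < c <;>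
      simp [Set.indicator_of_mem, Set.indicator_of_notMem, htJ, h0c, not_lt.1]
  rw [hset]
  refine ((usc_open_lt hJ hH c).measurableSet).union ?_
  split_ifs
  · exact hJ.isClosed_compl.measurableSet
  · exact MeasurableSet.empty

lemma insertion_lemma {a' b' : ℝ} {H : ℝ → ℝ}
    (hH : UpperSemicontinuousOn H (Ioo a' b')) (hH1 : ∀ t ∈ Ioo a' b', 1 ≤ H t)
    {g : ℝ → ℝ≥0∞} (hg : LowerSemicontinuous g)
    (hlt : ∀ t ∈ Ioo a' b', ENNReal.ofReal (H t) < g t) :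
    ∃ w : ℝ → ℝ, ContinuousOn w (Ioo a' b') ∧
      ∀ t ∈ Ioo a' b', H t ≤ w t ∧ 1 ≤ w t ∧ ENNReal.ofReal (w t) ≤ g t := by
  classical
  set J : Set ℝ := Ioo a' b' with hJdef
  have hJo : IsOpen J := isOpen_Ioo
  set V : ℚ → Set ℝ := fun q => {t | t ∈ J ∧ H t < q} ∩ {t | ENNReal.ofReal q < g t} with hVdef
  have hVopen : ∀ q, IsOpen (V q) := fun q =>
    (usc_open_lt hJo hH q).inter (hg.isOpen_preimage (ENNReal.ofReal (q:ℝ)))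
  have hVsub : ∀ q, V q ⊆ J := fun q t ht => ht.1.1
  have hVH : ∀ q : ℚ, ∀ t ∈ V q, H t < q := fun q t ht => ht.1.2
  have hVg : ∀ q : ℚ, ∀ t ∈ V q, ENNReal.ofReal q < g t := fun q t ht => ht.2
  have hcover : ∀ t ∈ J, ∃ q : ℚ, t ∈ V q := by
    intro t ht
    rcases eq_or_ne (g t) ⊤ with htop | hne
    · obtain ⟨q, hq⟩ := exists_rat_gt (H t)
      refine ⟨q, ⟨ht, hq⟩, ?_⟩
      show ENNReal.ofReal (q:ℝ) < g t
      rw [htop]; exact ENNReal.ofReal_lt_top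
    · have h0H : 0 ≤ H t := le_trans zero_le_one (hH1 t ht)
      have hlt' : H t < (g t).toReal :=
        (ENNReal.ofReal_lt_iff_lt_toReal h0H hne).1 (hlt t ht)
      obtain ⟨q, hq1, hq2⟩ := exists_rat_btwn hlt'
      refine ⟨q, ⟨ht, hq1⟩, ?_⟩
      show ENNReal.ofReal (q:ℝ) < g t
      rw [ENNReal.ofReal_lt_iff_lt_toReal (le_trans h0H hq1.le) hne]
      exact hq2
  -- partition of unity on the subtype
  set X := ↥J
  set U : ℚ → Set X := fun q => Subtype.val ⁻¹' V q with hUdef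
  have hUo : ∀ q, IsOpen (U q) := fun q => (hVopen q).preimage continuous_subtype_val
  have hUcov : (univ : Set X) ⊆ ⋃ q, U q := by
    intro x _
    obtain ⟨q, hq⟩ := hcover x.1 x.2
    exact mem_iUnion.2 ⟨q, hq⟩
  obtain ⟨f, hsub⟩ := PartitionOfUnity.exists_isSubordinate isClosed_univ U hUo hUcov
  set w₀ : X → ℝ := fun x => ∑ᶠ q : ℚ, f q x • (q : ℝ) with hw₀def
  have hw₀cont : Continuous w₀ :=
    hsub.continuous_finsum_smul hUo (fun q => continuousOn_const)
  have hactive : ∀ (x : X) (q : ℚ), f q x ≠ 0 → (x : ℝ) ∈ V q := by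
    intro x q hq
    exact hsub q (subset_tsupport _ hq)
  have hbounds : ∀ x : X, H x ≤ w₀ x ∧ 1 ≤ w₀ x ∧ ENNReal.ofReal (w₀ x) ≤ g x := by
    intro x
    have hfin : {q : ℚ | x ∈ Function.support (f q)}.Finite := f.locallyFinite.point_finite x
    have hfin' : (Function.support fun q : ℚ => f q x).Finite := by
      convert hfin using 1
      rfl
    set T : Finset ℚ := hfin'.toFinset with hTdef
    have hTsub : (Function.support fun q : ℚ => f q x) ⊆ T := by
      intro q hq; simp [hTdef, Set.Finite.mem_toFinset]; exact hq
    have hw₀x : w₀ x = ∑ q ∈ T, f q x * q := by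
      rw [hw₀def]
      refine finsum_eq_sum_of_support_subset _ ?_
      intro q hq
      apply hTsub
      intro h0
      apply hq
      simp [Function.mem_support] at h0 ⊢
      simp [h0]
    have hsum1 : ∑ q ∈ T, f q x = 1 := by
      have := f.sum_eq_one (mem_univ x)
      rwa [finsum_eq_sum_of_support_subset _ hTsub] at this
    have hHx1 : 1 ≤ H x := hH1 x.1 x.2
    have hle1 : H x ≤ w₀ x := by
      rw [hw₀x]
      calc H (x:ℝ) = ∑ q ∈ T, f q x * H x := by rw [← Finset.sum_mul, hsum1, one_mul]
        _ ≤ ∑ q ∈ T, f q x * q := by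
            refine Finset.sum_le_sum fun q _ => ?_
            rcases eq_or_ne (f q x) 0 with h0 | h0
            · simp [h0]
            · exact mul_le_mul_of_nonneg_left (hVH q _ (hactive x q h0)).le (f.nonneg q x)
    have hle2 : 1 ≤ w₀ x := by
      rw [hw₀x]
      calc (1:ℝ) = ∑ q ∈ T, f q x * 1 := by rw [← Finset.sum_mul, hsum1, one_mul]
        _ ≤ ∑ q ∈ T, f q x * q := by
            refine Finset.sum_le_sum fun q _ => ?_
            rcases eq_or_ne (f q x) 0 with h0 | h0
            · simp [h0]
            · refine mul_le_mul_of_nonneg_left ?_ (f.nonneg q x)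
              have := lt_of_le_of_lt hHx1 (hVH q _ (hactive x q h0))
              exact_mod_cast this.le
    refine ⟨hle1, hle2, ?_⟩
    rcases eq_or_ne (g x) ⊤ with htop | hne
    · rw [htop]; exact le_top
    · have hwle : w₀ x ≤ (g x).toReal := by
        rw [hw₀x]
        calc ∑ q ∈ T, f q x * q ≤ ∑ q ∈ T, f q x * (g x).toReal := by
              refine Finset.sum_le_sum fun q _ => ?_
              rcases eq_or_ne (f q x) 0 with h0 | h0
              · simp [h0]
              · refine mul_le_mul_of_nonneg_left ?_ (f.nonneg q x)
                have hq := hVg q _ (hactive x q h0)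
                have hq0 : (0:ℝ) ≤ (q:ℝ) := by
                  have := lt_of_le_of_lt hHx1 (hVH q _ (hactive x q h0))
                  have h01 : (1:ℝ) ≤ (q:ℝ) := by exact_mod_cast this.le
                  linarith
                exact ((ENNReal.ofReal_lt_iff_lt_toReal hq0 hne).1 hq).le
          _ = (g x).toReal := by rw [← Finset.sum_mul, hsum1, one_mul]
      calc ENNReal.ofReal (w₀ x) ≤ ENNReal.ofReal (g x).toReal := ENNReal.ofReal_le_ofReal hwle
        _ = g x := ENNReal.ofReal_toReal hne
  refine ⟨fun t => if ht : t ∈ J then w₀ ⟨t, ht⟩ else 1, ?_, ?_⟩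
  · rw [continuousOn_iff_continuous_restrict]
    convert hw₀cont using 1
    ext x
    simp only [Set.restrict_apply]
    rw [dif_pos x.2]
  · intro t ht
    have := hbounds ⟨t, ht⟩
    simpa [dif_pos ht] using this

end Insertion

section Transfer

variable {E : Type*} [NormedAddCommGroup E] [InnerProductSpace ℝ E]

lemma prod_norm_sub {p q : ℝ × E} : ‖p - q‖ = max |p.1 - q.1| ‖p.2 - q.2‖ := by
  rw [Prod.norm_def, Prod.fst_sub, Prod.snd_sub, Real.norm_eq_abs]

lemma frechet_transfer {S : ℝ → Set E} {Ψ G : ℝ → ℝ} {d s lo hi : ℝ} (hd : 0 < d)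
    (hΨ : HasDerivAt Ψ d s) (hG : ContinuousAt G (Ψ s)) (hGΨ : G (Ψ s) = s)
    (hlo : lo < Ψ s) (hhi : Ψ s < hi) (hinv : ∀ τ, lo < τ → τ < hi → Ψ (G τ) = τ)
    {y : E} {α : ℝ} {w : E}
    (hv : (α, w) ∈ frechetNCP (sgraph (fun r => S (Ψ r))) (s, y)) :
    (α / d, w) ∈ frechetNCP (sgraph S) (Ψ s, y) := by
  intro ε hε
  set M : ℝ := max (2 / d) 1 with hMdef
  have hM1 : (1:ℝ) ≤ M := le_max_right _ _
  have hM2 : 2 / d ≤ M := le_max_left _ _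
  have hM : 0 < M := lt_of_lt_of_le one_pos hM1
  set ε₁ : ℝ := ε / (2 * M) with hε₁def
  have hε₁pos : 0 < ε₁ := by positivity
  set ε₂ : ℝ := min (d / 2) (ε * d * d / (4 * (|α| + 1))) with hε₂def
  have hε₂pos : 0 < ε₂ := lt_min (by positivity) (by positivity)
  have hε₂d : ε₂ ≤ d / 2 := min_le_left _ _
  have hε₂α : ε₂ ≤ ε * d * d / (4 * (|α| + 1)) := min_le_right _ _
  obtain ⟨δ₁, hδ₁pos, hδ₁⟩ := hv ε₁ hε₁pos
  have hder := Asymptotics.isLittleO_iff.1 (hasDerivAt_iff_isLittleO.1 hΨ) hε₂pos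
  obtain ⟨δ₂, hδ₂pos, hder'⟩ := Metric.eventually_nhds_iff.1 hder
  set κ : ℝ := min δ₁ δ₂ with hκdef
  have hκpos : 0 < κ := lt_min hδ₁pos hδ₂pos
  have hGev : ∀ᶠ τ in 𝓝 (Ψ s), |G τ - s| < κ := by
    have h1 : Tendsto G (𝓝 (Ψ s)) (𝓝 s) := by
      have h0 := hG.tendsto
      rwa [hGΨ] at h0
    have h2 := h1 (Metric.ball_mem_nhds s hκpos)
    filter_upwards [h2] with τ hτ
    simpa [Real.dist_eq] using hτ
  obtain ⟨δ₃, hδ₃pos, hG'⟩ := Metric.eventually_nhds_iff.1 hGev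
  refine ⟨min (min δ₃ δ₁) (min (Ψ s - lo) (hi - Ψ s)),
    lt_min (lt_min hδ₃pos hδ₁pos) (lt_min (by linarith) (by linarith)), ?_⟩
  rintro ⟨τ, y'⟩ hq hqd
  rw [prod_norm_sub] at hqd ⊢
  simp only at hqd ⊢
  set A : ℝ := |τ - Ψ s| with hAdef
  set B : ℝ := ‖y' - y‖ with hBdef
  have hA0 : 0 ≤ A := abs_nonneg _
  have hB0 : 0 ≤ B := norm_nonneg _
  have hAδ : A < min (min δ₃ δ₁) (min (Ψ s - lo) (hi - Ψ s)) :=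
    lt_of_le_of_lt (le_max_left _ _) hqd
  have hBδ : B < min (min δ₃ δ₁) (min (Ψ s - lo) (hi - Ψ s)) :=
    lt_of_le_of_lt (le_max_right _ _) hqd
  have hτlo : lo < τ := by
    have h1 : A < Ψ s - lo := lt_of_lt_of_le hAδ (le_trans (min_le_right _ _) (min_le_left _ _))
    have := abs_lt.1 h1
    linarith [this.1]
  have hτhi : τ < hi := by
    have h1 : A < hi - Ψ s := lt_of_lt_of_le hAδ (le_trans (min_le_right _ _) (min_le_right _ _))
    have := abs_lt.1 h1
    linarith [this.2]
  set σ : ℝ := G τ with hσdef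
  have hΨσ : Ψ σ = τ := hinv τ hτlo hτhi
  have hσs : |σ - s| < κ := by
    apply hG'
    rw [Real.dist_eq]
    exact lt_of_lt_of_le hAδ (le_trans (min_le_left _ _) (min_le_left _ _))
  set C : ℝ := |σ - s| with hCdef
  have hC0 : 0 ≤ C := abs_nonneg _
  have hE : |Ψ σ - Ψ s - (σ - s) * d| ≤ ε₂ * C := by
    have := hder' (show dist σ s < δ₂ by
      rw [Real.dist_eq]; exact lt_of_lt_of_le hσs (min_le_right _ _))
    simpa [Real.norm_eq_abs, smul_eq_mul] using this
  rw [hΨσ] at hE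
  have hCA : C ≤ 2 / d * A := by
    have h1 : d * C - A ≤ ε₂ * C := by
      have h2 : |(σ - s) * d| - |τ - Ψ s| ≤ |τ - Ψ s - (σ - s) * d| := by
        have := abs_sub_abs_le_abs_sub ((σ - s) * d) (τ - Ψ s)
        calc |(σ - s) * d| - |τ - Ψ s| ≤ |(σ - s) * d - (τ - Ψ s)| := this
          _ = |τ - Ψ s - (σ - s) * d| := by rw [abs_sub_comm]
      have h3 : |(σ - s) * d| = C * d := by rw [abs_mul, abs_of_pos hd]
      nlinarith [hE]
    have h4 : d * C ≤ 2 * A := by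
      nlinarith [mul_le_mul_of_nonneg_right hε₂d hC0]
    have h5 : C ≤ 2 * A / d := (le_div_iff₀ hd).mpr (by linarith)
    calc C ≤ 2 * A / d := h5
      _ = 2 / d * A := by ring
  -- apply the Fréchet inequality at (σ, y')
  have hmem : (σ, y') ∈ sgraph (fun r => S (Ψ r)) := by
    show y' ∈ S (Ψ σ)
    rw [hΨσ]
    exact hq
  have hnear : ‖((σ, y') : ℝ × E) - (s, y)‖ < δ₁ := by
    rw [prod_norm_sub]
    simp only
    refine max_lt (lt_of_lt_of_le hσs (min_le_left _ _)) ?_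
    exact lt_of_lt_of_le hBδ (le_trans (min_le_left _ _) (min_le_right _ _))
  have hfre := hδ₁ (σ, y') hmem hnear
  rw [prod_norm_sub] at hfre
  simp only at hfre
  have hfre' : α * (σ - s) + ⟪w, y' - y⟫ ≤ ε₁ * max C B := by
    have hpi : pinner ((α, w) : ℝ × E) ((σ, y') - (s, y)) = α * (σ - s) + ⟪w, y' - y⟫ := rfl
    rw [hpi] at hfre
    exact hfre
  -- conclude
  have hgoal : pinner ((α / d, w) : ℝ × E) ((τ, y') - (Ψ s, y)) =
      α / d * (τ - Ψ s) + ⟪w, y' - y⟫ := rfl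
  rw [hgoal]
  have hiden : α / d * (τ - Ψ s) + ⟪w, y' - y⟫ =
      (α * (σ - s) + ⟪w, y' - y⟫) + α / d * (τ - Ψ s - (σ - s) * d) := by
    field_simp
    ring
  rw [hiden]
  have ht3 : α / d * (τ - Ψ s - (σ - s) * d) ≤ |α| / d * (ε₂ * C) := by
    calc α / d * (τ - Ψ s - (σ - s) * d) ≤ |α / d * (τ - Ψ s - (σ - s) * d)| := le_abs_self _
      _ = |α| / d * |τ - Ψ s - (σ - s) * d| := by
          rw [abs_mul, abs_div, abs_of_pos hd]
      _ ≤ |α| / d * (ε₂ * C) := by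
          exact mul_le_mul_of_nonneg_left hE (by positivity)
  have hmaxCB : max C B ≤ M * max A B := by
    refine max_le ?_ ?_
    · calc C ≤ 2 / d * A := hCA
        _ ≤ M * A := mul_le_mul_of_nonneg_right hM2 hA0
        _ ≤ M * max A B := mul_le_mul_of_nonneg_left (le_max_left _ _) hM.le
    · calc B ≤ max A B := le_max_right _ _
        _ = 1 * max A B := (one_mul _).symm
        _ ≤ M * max A B := mul_le_mul_of_nonneg_right hM1 (le_trans hB0 (le_max_right _ _))
  have hterm1 : ε₁ * max C B ≤ ε / 2 * max A B := by
    calc ε₁ * max C B ≤ ε₁ * (M * max A B) := mul_le_mul_of_nonneg_left hmaxCB hε₁pos.le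
      _ = ε / 2 * max A B := by rw [hε₁def]; field_simp
  have hterm2 : |α| / d * (ε₂ * C) ≤ ε / 2 * max A B := by
    have h1 : |α| / d * (ε₂ * C) ≤ |α| / d * (ε₂ * (2 / d * A)) := by
      refine mul_le_mul_of_nonneg_left (mul_le_mul_of_nonneg_left hCA hε₂pos.le) (by positivity)
    have h2 : |α| / d * (ε₂ * (2 / d * A)) ≤ ε / 2 * A := by
      have hαp : 0 ≤ |α| := abs_nonneg _
      have h3 : |α| / d * (ε₂ * (2 / d)) ≤ ε / 2 := by
        have h4 : |α| / d * (ε₂ * (2 / d)) ≤ |α| / d * ((ε * d * d / (4 * (|α| + 1))) * (2 / d)) := by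
          refine mul_le_mul_of_nonneg_left (mul_le_mul_of_nonneg_right hε₂α (by positivity))
            (by positivity)
        have h5 : |α| / d * ((ε * d * d / (4 * (|α| + 1))) * (2 / d)) = ε * (|α| / (2 * (|α| + 1))) := by
          field_simp
          ring
        have h6 : |α| / (2 * (|α| + 1)) ≤ 1 / 2 := by
          rw [div_le_div_iff₀ (by positivity) (by norm_num)]
          linarith
        calc |α| / d * (ε₂ * (2 / d)) ≤ ε * (|α| / (2 * (|α| + 1))) := by rw [← h5]; exact h4
          _ ≤ ε * (1 / 2) := mul_le_mul_of_nonneg_left h6 hε.le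
          _ = ε / 2 := by ring
      calc |α| / d * (ε₂ * (2 / d * A)) = (|α| / d * (ε₂ * (2 / d))) * A := by ring
        _ ≤ ε / 2 * A := mul_le_mul_of_nonneg_right h3 hA0
    calc |α| / d * (ε₂ * C) ≤ ε / 2 * A := le_trans h1 h2
      _ ≤ ε / 2 * max A B := mul_le_mul_of_nonneg_left (le_max_left _ _) (by positivity)
  calc (α * (σ - s) + ⟪w, y' - y⟫) + α / d * (τ - Ψ s - (σ - s) * d)
      ≤ ε₁ * max C B + |α| / d * (ε₂ * C) := add_le_add hfre' ht3
    _ ≤ ε / 2 * max A B + ε / 2 * max A B := add_le_add hterm1 hterm2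
    _ = ε * max A B := by ring

end Transfer

section CoderivTransfer

variable {E : Type*} [NormedAddCommGroup E] [InnerProductSpace ℝ E]

lemma coderiv_transfer {S : ℝ → Set E} {Ψ G Ψd : ℝ → ℝ} {ρ : ℝ}
    (hΨder : ∀ r ∈ Ioo (0:ℝ) ρ, HasDerivAt Ψ (Ψd r) r)
    (hΨdpos : ∀ r ∈ Ioo (0:ℝ) ρ, 0 < Ψd r)
    (hΨdcont : ContinuousOn Ψd (Ioo 0 ρ))
    (hGcont : ∀ r ∈ Ioo (0:ℝ) ρ, ContinuousAt G (Ψ r))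
    (hGΨ : ∀ r ∈ Ioo (0:ℝ) ρ, G (Ψ r) = r)
    {lo hi : ℝ} (hmemJ : ∀ r ∈ Ioo (0:ℝ) ρ, Ψ r ∈ Ioo lo hi)
    (hinv : ∀ τ ∈ Ioo lo hi, Ψ (G τ) = τ)
    {r : ℝ} (hr : r ∈ Ioo (0:ℝ) ρ) {x : E} {u : E} {α : ℝ}
    (hα : α ∈ coderiv (fun s => S (Ψ s)) r x u) :
    α / Ψd r ∈ coderiv S (Ψ r) x u := by
  obtain ⟨zs, vs, hzsmem, hvs, hzt, hvt⟩ := hα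
  have hfst : Tendsto (fun i => (zs i).1) atTop (𝓝 r) := (continuous_fst.tendsto _).comp hzt
  have hev : ∀ᶠ i in atTop, (zs i).1 ∈ Ioo (0:ℝ) ρ := hfst.eventually (isOpen_Ioo.mem_nhds hr)
  obtain ⟨N, hN⟩ := Filter.eventually_atTop.1 hev
  set sseq : ℕ → ℝ := fun i => (zs (i + N)).1 with hsseq
  have hsmem : ∀ i, sseq i ∈ Ioo (0:ℝ) ρ := fun i => hN _ (Nat.le_add_left _ _)
  have htail : Tendsto (fun i : ℕ => i + N) atTop atTop := tendsto_add_atTop_nat N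
  have hzt' : Tendsto (fun i => zs (i + N)) atTop (𝓝 (r, x)) := hzt.comp htail
  have hvt' : Tendsto (fun i => vs (i + N)) atTop (𝓝 (α, -u)) := hvt.comp htail
  have hst : Tendsto sseq atTop (𝓝 r) := (continuous_fst.tendsto _).comp hzt'
  refine ⟨fun i => (Ψ (sseq i), (zs (i + N)).2),
    fun i => ((vs (i + N)).1 / Ψd (sseq i), (vs (i + N)).2), ?_, ?_, ?_, ?_⟩
  · intro i
    exact hzsmem (i + N)
  · intro i
    have hfr : ((vs (i + N)).1, (vs (i + N)).2) ∈
        frechetNCP (sgraph fun s => S (Ψ s)) (sseq i, (zs (i + N)).2) := hvs (i + N)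
    exact frechet_transfer (hΨdpos _ (hsmem i)) (hΨder _ (hsmem i)) (hGcont _ (hsmem i))
      (hGΨ _ (hsmem i)) (hmemJ _ (hsmem i)).1 (hmemJ _ (hsmem i)).2
      (fun τ h1 h2 => hinv τ ⟨h1, h2⟩) hfr
  · have hΨcontAt : ContinuousAt Ψ r := (hΨder r hr).continuousAt
    exact (hΨcontAt.tendsto.comp hst).prodMk_nhds ((continuous_snd.tendsto _).comp hzt')
  · have h1 : Tendsto (fun i => (vs (i + N)).1) atTop (𝓝 α) :=
      (continuous_fst.tendsto _).comp hvt'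
    have h2 : Tendsto (fun i => Ψd (sseq i)) atTop (𝓝 (Ψd r)) :=
      ((hΨdcont.continuousAt (isOpen_Ioo.mem_nhds hr)).tendsto).comp hst
    exact (h1.div h2 (ne_of_gt (hΨdpos r hr))).prodMk_nhds
      ((continuous_snd.tendsto _).comp hvt')

end CoderivTransfer








/-- Theorem A, (d) ⇒ (a): integrability of the oriented talweg on
`(a,b)` yields a desingularization `Ψ : [0,ρ] → [a,b']` of the oriented coderivative. -/
theorem statement3 {E : Type*} [NormedAddCommGroup E] [InnerProductSpace ℝ E]
    [FiniteDimensional ℝ E] (S : ℝ → Set E)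
    (hS : SmoothSweepingProcess S) (hbv : BoundedValues S) (hA1 : AssumptionA1 S)
    (a : ℝ) (ha : a ∈ goodSet S) (b : ℝ) (hab : a < b)
    (hint : ∫⁻ t in Ioo a b, orientedTalweg S t < ⊤) :
    ∃ b' ∈ Ioc a b, ∃ ρ : ℝ, 0 < ρ ∧ ∃ Ψ Ψd : ℝ → ℝ,
      ContinuousOn Ψ (Icc 0 ρ) ∧ InjOn Ψ (Icc 0 ρ) ∧
      Ψ '' Icc 0 ρ = Icc a b' ∧ Ψ 0 = a ∧ Ψ ρ = b' ∧
      (∀ r ∈ Ioo 0 ρ, HasDerivAt Ψ (Ψd r) r) ∧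
      ContinuousOn Ψd (Ioo 0 ρ) ∧ (∀ r ∈ Ioo 0 ρ, 0 < Ψd r) ∧
      ∀ r ∈ Ioo 0 ρ, ∀ x ∈ S (Ψ r), asymMod (fun s => S (Ψ s)) r x ≤ 1 := by
  classical
  obtain ⟨hdom, hA2, hA3⟩ := ha
  obtain ⟨δ₂, hδ₂pos, hfin⟩ := hA2
  obtain ⟨δ₃, hδ₃pos, hHP⟩ := hA3
  have hcl : IsClosed (sgraph S) := hS.1
  set b' : ℝ := min b (min (a + δ₂) (a + δ₃)) with hb'def
  have hab' : a < b' := lt_min hab (lt_min (by linarith) (by linarith))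
  have hb'b : b' ≤ b := min_le_left _ _
  have hJ₂ : Ioo a b' ⊆ Ioo a (a + δ₂) :=
    Ioo_subset_Ioo le_rfl (le_trans (min_le_right _ _) (min_le_left _ _))
  have hJ₃ : Ioo a b' ⊆ Ioo a (a + δ₃) :=
    Ioo_subset_Ioo le_rfl (le_trans (min_le_right _ _) (min_le_right _ _))
  have hJb : Ioo a b' ⊆ Ioo a b := Ioo_subset_Ioo le_rfl hb'b
  have hfinJ : ∀ t ∈ Ioo a b', orientedTalweg S t < ⊤ := fun t ht => hfin t (hJ₂ ht)
  have hHPJ : ∀ t₀ ∈ Ioo a b', HPContinuousAt (HSmap S) (Ioo a b') t₀ := by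
    intro t₀ ht₀ ε hε
    obtain ⟨δ, hδ, h⟩ := hHP t₀ (hJ₃ ht₀) ε hε
    exact ⟨δ, hδ, fun t ht htd => h t (hJ₃ ht) htd⟩
  have husc : UpperSemicontinuousOn (fun t => max (orientedTalweg S t).toReal 1) (Ioo a b') :=
    talweg_usc hcl hbv hfinJ hHPJ
  set H : ℝ → ℝ := fun t => max (orientedTalweg S t).toReal 1 with hHdef
  have hH1 : ∀ t ∈ Ioo a b', 1 ≤ H t := fun t _ => le_max_right _ _
  have hmeasI : Measurable (Set.indicator (Ioo a b') H) := indicator_measurable isOpen_Ioo husc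
  set F : ℝ → NNReal := fun t => Real.toNNReal (Set.indicator (Ioo a b') H t) with hFdef
  have hFcoe : ∀ t, (F t : ℝ≥0∞) =
      (Set.indicator (Ioo a b') (fun t => ENNReal.ofReal (H t))) t := by
    intro t
    by_cases ht : t ∈ Ioo a b'
    · rw [hFdef]
      simp only
      rw [Set.indicator_of_mem ht, Set.indicator_of_mem ht]
      rfl
    · rw [hFdef]
      simp only
      rw [Set.indicator_of_notMem ht, Set.indicator_of_notMem ht]
      simp
  have hFmeas : Measurable F := measurable_real_toNNReal.comp hmeasI
  have hFint : ∫⁻ t, (F t : ℝ≥0∞) < ⊤ := by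
    have h1 : ∫⁻ t, (F t : ℝ≥0∞) = ∫⁻ t in Ioo a b', ENNReal.ofReal (H t) := by
      simp_rw [hFcoe]
      exact lintegral_indicator measurableSet_Ioo _
    rw [h1]
    have h2 : ∫⁻ t in Ioo a b', ENNReal.ofReal (H t) ≤
        ∫⁻ t in Ioo a b', (orientedTalweg S t + 1) := by
      refine lintegral_mono_ae ?_
      rw [ae_restrict_iff' measurableSet_Ioo]
      refine Filter.Eventually.of_forall (fun t ht => ?_)
      have hf := hfinJ t ht
      have htR : (0:ℝ) ≤ (orientedTalweg S t).toReal := ENNReal.toReal_nonneg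
      have hHle : H t ≤ (orientedTalweg S t).toReal + 1 := by
        rw [hHdef]
        exact max_le (by linarith) (by linarith)
      calc ENNReal.ofReal (H t) ≤ ENNReal.ofReal ((orientedTalweg S t).toReal + 1) :=
            ENNReal.ofReal_le_ofReal hHle
        _ = ENNReal.ofReal ((orientedTalweg S t).toReal) + ENNReal.ofReal 1 :=
            ENNReal.ofReal_add htR zero_le_one
        _ = orientedTalweg S t + 1 := by rw [ENNReal.ofReal_toReal hf.ne, ENNReal.ofReal_one]
    have h3 : ∫⁻ t in Ioo a b', (orientedTalweg S t + 1) =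
        (∫⁻ t in Ioo a b', orientedTalweg S t) + ∫⁻ (_ : ℝ) in Ioo a b', (1:ℝ≥0∞) :=
      lintegral_add_right _ measurable_const
    have h4 : (∫⁻ t in Ioo a b', orientedTalweg S t) ≤ ∫⁻ t in Ioo a b, orientedTalweg S t :=
      lintegral_mono_set hJb
    have h5 : (∫⁻ (_ : ℝ) in Ioo a b', (1:ℝ≥0∞)) < ⊤ := by
      rw [setLIntegral_one, Real.volume_Ioo]
      exact ENNReal.ofReal_lt_top
    calc ∫⁻ t in Ioo a b', ENNReal.ofReal (H t)
        ≤ (∫⁻ t in Ioo a b', orientedTalweg S t) + ∫⁻ (_ : ℝ) in Ioo a b', (1:ℝ≥0∞) := by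
          rw [← h3]; exact h2
      _ < ⊤ := ENNReal.add_lt_top.2 ⟨lt_of_le_of_lt h4 hint, h5⟩
  obtain ⟨g, hgF, hglsc, hgint⟩ :=
    exists_lt_lowerSemicontinuous_lintegral_ge volume F hFmeas one_ne_zero
  have hgtot : ∫⁻ t, g t < ⊤ :=
    lt_of_le_of_lt hgint (ENNReal.add_lt_top.2 ⟨hFint, ENNReal.one_lt_top⟩)
  have hltJ : ∀ t ∈ Ioo a b', ENNReal.ofReal (H t) < g t := by
    intro t ht
    have := hgF t
    rwa [hFcoe t, Set.indicator_of_mem ht] at this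
  obtain ⟨w, hwcont, hwprop⟩ := insertion_lemma husc hH1 hglsc hltJ
  set hh : ℝ → ℝ := fun t => if t ∈ Ioo a b' then w t else 1 with hhhdef
  have hheqw : EqOn hh w (Ioo a b') := fun t ht => if_pos ht
  have hh1 : ∀ t, 1 ≤ hh t := by
    intro t
    by_cases ht : t ∈ Ioo a b'
    · rw [hheqw ht]; exact (hwprop t ht).2.1
    · show (1:ℝ) ≤ if t ∈ Ioo a b' then w t else 1
      rw [if_neg ht]
  have hhpos : ∀ t, 0 < hh t := fun t => lt_of_lt_of_le one_pos (hh1 t)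
  have hhcont : ContinuousOn hh (Ioo a b') := hwcont.congr hheqw
  have hhg : ∀ t ∈ Ioo a b', ENNReal.ofReal (hh t) ≤ g t := fun t ht => by
    rw [hheqw ht]; exact (hwprop t ht).2.2
  have hhH : ∀ t ∈ Ioo a b', H t ≤ hh t := fun t ht => by
    rw [hheqw ht]; exact (hwprop t ht).1
  have hIoo_int : IntegrableOn hh (Ioo a b') := by
    constructor
    · exact hhcont.aestronglyMeasurable measurableSet_Ioo
    · rw [hasFiniteIntegral_iff_norm]
      have hb : ∀ᵐ t ∂(volume.restrict (Ioo a b')), ENNReal.ofReal ‖hh t‖ ≤ g t := by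
        rw [ae_restrict_iff' measurableSet_Ioo]
        refine Filter.Eventually.of_forall fun t ht => ?_
        rw [Real.norm_eq_abs, abs_of_pos (hhpos t)]
        exact hhg t ht
      calc ∫⁻ t in Ioo a b', ENNReal.ofReal ‖hh t‖ ≤ ∫⁻ t in Ioo a b', g t :=
            lintegral_mono_ae hb
        _ ≤ ∫⁻ t, g t := setLIntegral_le_lintegral _ _
        _ < ⊤ := hgtot
  have hIcc_int : IntegrableOn hh (Icc a b') := by
    have hre : volume.restrict (Ioo a b') = volume.restrict (Icc a b') :=
      Measure.restrict_congr_set Ioo_ae_eq_Icc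
    unfold IntegrableOn
    rw [← hre]
    exact hIoo_int
  have hII : ∀ s ∈ Icc a b', ∀ t ∈ Icc a b', IntervalIntegrable hh volume s t := by
    intro s hs t ht
    rw [intervalIntegrable_iff]
    refine hIcc_int.mono_set (subset_trans ?_ (uIcc_subset_Icc hs ht))
    exact Ioc_subset_Icc_self
  set G : ℝ → ℝ := fun t => ∫ u in a..t, hh u with hGdef
  have hGcont : ContinuousOn G (Icc a b') := by
    have := intervalIntegral.continuousOn_primitive_interval (a := a) (b := b') (f := hh)
      (μ := volume) (by rwa [uIcc_of_le hab'.le])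
    rwa [uIcc_of_le hab'.le] at this
  have hG0 : G a = 0 := intervalIntegral.integral_same
  have hGmono : StrictMonoOn G (Icc a b') := by
    intro s hs t ht hst
    have hdiff : G t - G s = ∫ u in s..t, hh u :=
      intervalIntegral.integral_interval_sub_left (hII a (left_mem_Icc.2 hab'.le) t ht)
        (hII a (left_mem_Icc.2 hab'.le) s hs)
    have hone : ∫ u in s..t, (1:ℝ) = t - s := by simp
    have hlow : t - s ≤ ∫ u in s..t, hh u := by
      rw [← hone]
      exact intervalIntegral.integral_mono_on hst.le intervalIntegrable_const
        (hII s hs t ht) (fun u _ => hh1 u)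
    have : 0 < G t - G s := by rw [hdiff]; linarith
    linarith
  have hGinj : InjOn G (Icc a b') := hGmono.injOn
  have hGmonoOn : MonotoneOn G (Icc a b') := hGmono.monotoneOn
  have hρpos : 0 < G b' := by
    have := hGmono (left_mem_Icc.2 hab'.le) (right_mem_Icc.2 hab'.le) hab'
    rwa [hG0] at this
  have himg : G '' Icc a b' = Icc 0 (G b') := by
    apply Subset.antisymm
    · rintro _ ⟨t, ht, rfl⟩
      refine ⟨?_, hGmonoOn ht (right_mem_Icc.2 hab'.le) ht.2⟩
      rw [← hG0]
      exact hGmonoOn (left_mem_Icc.2 hab'.le) ht ht.1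
    · have := intermediate_value_Icc hab'.le hGcont
      rwa [hG0] at this
  set Ψ : ℝ → ℝ := Function.invFunOn G (Icc a b') with hΨdef
  have hleft : ∀ t ∈ Icc a b', Ψ (G t) = t := fun t ht => hGinj.leftInvOn_invFunOn ht
  have hex : ∀ r ∈ Icc 0 (G b'), ∃ t ∈ Icc a b', G t = r := by
    intro r hr
    rw [← himg] at hr
    obtain ⟨t, ht, h⟩ := hr
    exact ⟨t, ht, h⟩
  have hright : ∀ r ∈ Icc 0 (G b'), G (Ψ r) = r := fun r hr =>
    Function.invFunOn_eq (hex r hr)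
  have hΨmem : ∀ r ∈ Icc 0 (G b'), Ψ r ∈ Icc a b' := fun r hr =>
    Function.invFunOn_mem (hex r hr)
  have hΨimg : Ψ '' Icc 0 (G b') = Icc a b' := by
    apply Subset.antisymm
    · rintro _ ⟨r, hr, rfl⟩
      exact hΨmem r hr
    · intro t ht
      refine ⟨G t, ?_, hleft t ht⟩
      rw [← himg]
      exact mem_image_of_mem _ ht
  have hΨ0 : Ψ 0 = a := by
    have := hleft a (left_mem_Icc.2 hab'.le)
    rwa [hG0] at this
  have hΨρ : Ψ (G b') = b' := hleft b' (right_mem_Icc.2 hab'.le)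
  have hΨinj : InjOn Ψ (Icc 0 (G b')) := by
    intro r1 h1 r2 h2 heq
    have := hright r1 h1
    rw [heq, hright r2 h2] at this
    exact this.symm
  have hΨcont : ContinuousOn Ψ (Icc 0 (G b')) := by
    rw [continuousOn_iff_isClosed]
    intro C hC
    refine ⟨G '' (C ∩ Icc a b'),
      ((isCompact_Icc.inter_left hC).image_of_continuousOn
        (hGcont.mono inter_subset_right)).isClosed, ?_⟩
    ext r
    constructor
    · rintro ⟨hrC, hr⟩
      exact ⟨⟨Ψ r, ⟨hrC, hΨmem r hr⟩, hright r hr⟩, hr⟩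
    · rintro ⟨⟨t, ⟨htC, htI⟩, rfl⟩, hr⟩
      refine ⟨?_, hr⟩
      rw [mem_preimage, hleft t htI]
      exact htC
  have hmemJΨ : ∀ r ∈ Ioo 0 (G b'), Ψ r ∈ Ioo a b' := by
    intro r hr
    have h1 := hΨmem r (Ioo_subset_Icc_self hr)
    refine ⟨lt_of_le_of_ne h1.1 ?_, lt_of_le_of_ne h1.2 ?_⟩
    · intro heq
      have h2 := hright r (Ioo_subset_Icc_self hr)
      rw [← heq, hG0] at h2
      exact absurd h2.symm (ne_of_gt hr.1)
    · intro heq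
      have h2 := hright r (Ioo_subset_Icc_self hr)
      rw [heq] at h2
      exact absurd h2.symm (ne_of_lt hr.2)
  have hGderiv : ∀ t ∈ Ioo a b', HasDerivAt G (hh t) t := by
    intro t ht
    exact intervalIntegral.integral_hasDerivAt_right
      (hII a (left_mem_Icc.2 hab'.le) t (Ioo_subset_Icc_self ht))
      (ContinuousOn.stronglyMeasurableAtFilter isOpen_Ioo hhcont t ht)
      (hhcont.continuousAt (isOpen_Ioo.mem_nhds ht))
  set Ψd : ℝ → ℝ := fun r => (hh (Ψ r))⁻¹ with hΨddef
  have hΨder : ∀ r ∈ Ioo 0 (G b'), HasDerivAt Ψ (Ψd r) r := by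
    intro r hr
    have hΨr : Ψ r ∈ Ioo a b' := hmemJΨ r hr
    have hcontΨ : ContinuousAt Ψ r := hΨcont.continuousAt (Icc_mem_nhds hr.1 hr.2)
    have hfg : ∀ᶠ y in 𝓝 r, G (Ψ y) = y := by
      filter_upwards [Ioo_mem_nhds hr.1 hr.2] with y hy
      exact hright y (Ioo_subset_Icc_self hy)
    exact HasDerivAt.of_local_left_inverse hcontΨ (hGderiv _ hΨr) (ne_of_gt (hhpos _)) hfg
  have hΨdpos : ∀ r ∈ Ioo 0 (G b'), 0 < Ψd r := fun r _ => inv_pos.2 (hhpos _)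
  have hΨdcont : ContinuousOn Ψd (Ioo 0 (G b')) := by
    refine ContinuousOn.inv₀ ?_ (fun r _ => ne_of_gt (hhpos _))
    exact hhcont.comp (hΨcont.mono Ioo_subset_Icc_self) (fun r hr => hmemJΨ r hr)
  have hGcontAt : ∀ r ∈ Ioo 0 (G b'), ContinuousAt G (Ψ r) := fun r hr =>
    (hGderiv _ (hmemJΨ r hr)).continuousAt
  have hGΨat : ∀ r ∈ Ioo 0 (G b'), G (Ψ r) = r := fun r hr =>
    hright r (Ioo_subset_Icc_self hr)
  have hinvIoo : ∀ τ ∈ Ioo a b', Ψ (G τ) = τ := fun τ hτ => hleft τ (Ioo_subset_Icc_self hτ)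
  refine ⟨b', ⟨hab', hb'b⟩, G b', hρpos, Ψ, Ψd, hΨcont, hΨinj, hΨimg, hΨ0, hΨρ,
    hΨder, hΨdcont, hΨdpos, ?_⟩
  intro r hr x hx
  refine asymMod_le_one (fun u hu α hα => ?_)
  have hcod : α / Ψd r ∈ coderiv S (Ψ r) x u :=
    coderiv_transfer hΨder hΨdpos hΨdcont hGcontAt hGΨat hmemJΨ hinvIoo hr hα
  have h1 : ENNReal.ofReal (α / Ψd r) ≤ orientedTalweg S (Ψ r) :=
    le_trans (le_asymMod hu hcod) (asymMod_le_talweg hx)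
  have hΨrJ : Ψ r ∈ Ioo a b' := hmemJΨ r hr
  have h2 : orientedTalweg S (Ψ r) ≤ ENNReal.ofReal (hh (Ψ r)) := by
    have hf := hfinJ _ hΨrJ
    calc orientedTalweg S (Ψ r) = ENNReal.ofReal (orientedTalweg S (Ψ r)).toReal :=
          (ENNReal.ofReal_toReal hf.ne).symm
      _ ≤ ENNReal.ofReal (H (Ψ r)) := ENNReal.ofReal_le_ofReal (le_max_left _ _)
      _ ≤ ENNReal.ofReal (hh (Ψ r)) := ENNReal.ofReal_le_ofReal (hhH _ hΨrJ)
  have h3 : α / Ψd r ≤ hh (Ψ r) :=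
    (ENNReal.ofReal_le_ofReal_iff (le_of_lt (hhpos _))).1 (le_trans h1 h2)
  have h4 : α / Ψd r = α * hh (Ψ r) := by
    rw [hΨddef]
    simp only
    rw [div_eq_mul_inv, inv_inv]
  rw [h4] at h3
  nlinarith [hhpos (Ψ r)]
end

section
/- Let S : ℝ ⇒ ℝⁿ be a smooth sweeping process with bounded values and let a, b ∈ ℝ with (a,b) ⊂ dom(S). If the multivalued map H_S is continuous for the Hausdorff–Pompeiu metric on (a,b), then S is continuous on (a,b), i.e., S is both outer and inner semicontinuous (equivalently, continuous for the Hausdorff–Pompeiu metric, since its values are compact) at every point of (a,b). -/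
open Set Metric Filter MeasureTheory
open scoped ENNReal RealInnerProductSpace Topology Pointwise

section AuxProofs

variable {E : Type*} [NormedAddCommGroup E] [InnerProductSpace ℝ E]

/-- A metric ball centered at a point of a closed set, disjoint from its frontier,
is contained in the set. -/
lemma aux_ball_subset {X : Type*} [NormedAddCommGroup X] [NormedSpace ℝ X]
    {G : Set X} (hG : IsClosed G) {z : X} (hz : z ∈ G) {δ : ℝ} (hδ : 0 < δ)
    (hdisj : ∀ p ∈ Metric.ball z δ, p ∉ frontier G) : Metric.ball z δ ⊆ G := by
  have hmem : ∀ p ∈ Metric.ball z δ, p ∈ G → p ∈ interior G := by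
    intro p hp hpG
    have h1 : p ∈ closure G := subset_closure hpG
    have h2 := hdisj p hp
    rw [frontier, Set.mem_diff] at h2
    push_neg at h2
    exact h2 h1
  intro w hw
  by_contra hwG
  have hpre := (convex_ball z δ).isPreconnected
  rcases hpre (interior G) Gᶜ isOpen_interior hG.isOpen_compl
      (fun p hp => by
        by_cases hpG : p ∈ G
        · exact Or.inl (hmem p hp hpG)
        · exact Or.inr hpG)
      ⟨z, Metric.mem_ball_self hδ, hmem z (Metric.mem_ball_self hδ) hz⟩
      ⟨w, hw, hwG⟩ with ⟨q, _, hq1, hq2⟩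
  exact hq2 (interior_subset hq1)

/-- Key excess estimate: if `H_S` is HP-close to `H_S t₀` near `t₀`, then for `t₁, t₂`
near `t₀`, every point of `S t₁` is close to `S t₂`. -/
lemma aux_excess (S : ℝ → Set E) (hG : IsClosed (sgraph S)) {a b t₀ : ℝ}
    (ht₀ : t₀ ∈ Ioo a b) {δ' ε' : ℝ} (hε' : 0 < ε')
    (hH : ∀ s ∈ Ioo a b, |s - t₀| < δ' →
      EMetric.hausdorffEdist (HSmap S s) (HSmap S t₀) < ENNReal.ofReal ε')
    {δ : ℝ} (hδpos : 0 < δ) (hδ1 : 3 * δ < δ') (hδ2 : 3 * δ < t₀ - a)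
    (hδ3 : 3 * δ < b - t₀) (hδ4 : 2 * δ ≤ ε')
    {t₁ t₂ : ℝ} (ht₁ : |t₁ - t₀| < δ) (ht₂ : |t₂ - t₀| < δ) (ht₂I : t₂ ∈ Ioo a b)
    {x : E} (hx : x ∈ S t₁) :
    EMetric.infEdist x (S t₂) ≤ ENNReal.ofReal (3 * ε') := by
  by_cases hb : ∀ p ∈ Metric.ball ((t₁, x) : ℝ × E) (2 * δ), p ∉ frontier (sgraph S)
  · -- the vertical segment stays inside the graph
    have hz : ((t₁, x) : ℝ × E) ∈ sgraph S := hx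
    have hsub := aux_ball_subset hG hz (by linarith) hb
    have hmem : ((t₂, x) : ℝ × E) ∈ Metric.ball ((t₁, x) : ℝ × E) (2 * δ) := by
      rw [Metric.mem_ball, Prod.dist_eq]
      have h1 : dist t₂ t₁ < 2 * δ := by
        rw [Real.dist_eq]
        have := abs_sub_abs_le_abs_sub (t₂ - t₀) (t₁ - t₀)
        have h2 : |t₂ - t₁| ≤ |t₂ - t₀| + |t₁ - t₀| := by
          calc |t₂ - t₁| = |(t₂ - t₀) - (t₁ - t₀)| := by ring_nf
            _ ≤ |t₂ - t₀| + |t₁ - t₀| := abs_sub _ _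
        linarith
      have h2 : dist x x = 0 := dist_self x
      rw [h2]
      exact max_lt h1 (by linarith)
    have hx2 : x ∈ S t₂ := hsub hmem
    have h0 : EMetric.infEdist x (S t₂) = 0 := EMetric.infEdist_zero_of_mem hx2
    rw [h0]
    exact zero_le
  · push_neg at hb
    obtain ⟨⟨s, y⟩, hpball, hpfr⟩ := hb
    rw [Metric.mem_ball, Prod.dist_eq] at hpball
    have hdist_s : |s - t₁| < 2 * δ := by
      have := le_max_left (dist s t₁) (dist y x)
      rw [Real.dist_eq] at this
      linarith [lt_of_le_of_lt this hpball]
    have hdist_y : dist y x < 2 * δ := by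
      have := le_max_right (dist s t₁) (dist y x)
      linarith [lt_of_le_of_lt this hpball]
    have hst₀ : |s - t₀| < 3 * δ := by
      calc |s - t₀| = |(s - t₁) + (t₁ - t₀)| := by ring_nf
        _ ≤ |s - t₁| + |t₁ - t₀| := abs_add_le _ _
        _ < 3 * δ := by linarith
    have hsab : |s - t₀| < 3 * δ → s ∈ Ioo a b := by
      intro h
      rw [abs_lt] at h
      exact ⟨by linarith [ht₀.1], by linarith [ht₀.2]⟩
    have hsI : s ∈ Ioo a b := hsab hst₀
    -- hop from H_S s to H_S t₀
    have h1 := hH s hsI (by linarith)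
    have hsy : ((s, y) : ℝ × E) ∈ HSmap S s := ⟨hpfr, rfl⟩
    have hinf1 : EMetric.infEdist ((s, y) : ℝ × E) (HSmap S t₀) < ENNReal.ofReal ε' :=
      lt_of_le_of_lt (EMetric.infEdist_le_hausdorffEdist_of_mem hsy) h1
    obtain ⟨q, hq, hedq⟩ := EMetric.infEdist_lt_iff.mp hinf1
    -- hop from H_S t₀ to H_S t₂
    have h2 := hH t₂ ht₂I (by linarith)
    rw [EMetric.hausdorffEdist, EMetric.hausdorffEdist_comm] at h2
    have hinf2 : EMetric.infEdist q (HSmap S t₂) < ENNReal.ofReal ε' :=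
      lt_of_le_of_lt (EMetric.infEdist_le_hausdorffEdist_of_mem hq) h2
    obtain ⟨q', hq', hedq'⟩ := EMetric.infEdist_lt_iff.mp hinf2
    -- q' lies in the graph, its second coordinate is in S t₂
    have hq'G : q' ∈ sgraph S := hG.frontier_subset hq'.1
    have hq'1 : q'.1 = t₂ := hq'.2
    have hmem2 : q'.2 ∈ S t₂ := by
      have : q'.2 ∈ S q'.1 := hq'G
      rwa [hq'1] at this
    calc EMetric.infEdist x (S t₂) ≤ edist x q'.2 := EMetric.infEdist_le_edist_of_mem hmem2
      _ ≤ edist x y + edist y q.2 + edist q.2 q'.2 := edist_triangle4 _ _ _ _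
      _ ≤ ENNReal.ofReal (2 * δ) + ENNReal.ofReal ε' + ENNReal.ofReal ε' := by
          refine add_le_add (add_le_add ?_ ?_) ?_
          · rw [edist_dist]
            exact ENNReal.ofReal_le_ofReal (by rw [dist_comm]; linarith)
          · exact le_trans (by rw [Prod.edist_eq]; exact le_max_right _ _) (le_of_lt hedq)
          · exact le_trans (by rw [Prod.edist_eq]; exact le_max_right _ _) (le_of_lt hedq')
      _ = ENNReal.ofReal (2 * δ + ε' + ε') := by
          rw [← ENNReal.ofReal_add (by linarith) (by linarith),
            ← ENNReal.ofReal_add (by linarith) (by linarith)]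
      _ ≤ ENNReal.ofReal (3 * ε') := ENNReal.ofReal_le_ofReal (by linarith)

/-- HP continuity of `S` follows from HP continuity of `H_S` on `(a,b)`. -/
lemma aux_hp (S : ℝ → Set E) (hG : IsClosed (sgraph S)) {a b : ℝ}
    (hHS : HPContinuousOn (HSmap S) (Ioo a b)) {t₀ : ℝ} (ht₀ : t₀ ∈ Ioo a b) :
    HPContinuousAt S (Ioo a b) t₀ := by
  intro ε hε
  have hε8 : 0 < ε / 8 := by linarith
  obtain ⟨δ', hδ'pos, hH⟩ := hHS t₀ ht₀ (ε / 8) hε8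
  set ε' : ℝ := ε / 8 with hε'def
  set δ : ℝ := min (min (δ' / 4) (ε' / 2)) (min ((t₀ - a) / 4) ((b - t₀) / 4)) with hδdef
  have hta : a < t₀ := ht₀.1
  have htb : t₀ < b := ht₀.2
  have hδpos : 0 < δ := by
    apply lt_min (lt_min (by linarith) (by linarith)) (lt_min (by linarith) (by linarith))
  have hδa : δ ≤ δ' / 4 := le_trans (min_le_left _ _) (min_le_left _ _)
  have hδb : δ ≤ ε' / 2 := le_trans (min_le_left _ _) (min_le_right _ _)
  have hδc : δ ≤ (t₀ - a) / 4 := le_trans (min_le_right _ _) (min_le_left _ _)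
  have hδd : δ ≤ (b - t₀) / 4 := le_trans (min_le_right _ _) (min_le_right _ _)
  refine ⟨δ, hδpos, ?_⟩
  intro t htI htd
  have h1 : ∀ x ∈ S t, EMetric.infEdist x (S t₀) ≤ ENNReal.ofReal (3 * ε') := by
    intro x hx
    exact aux_excess S hG ht₀ hε8 hH hδpos (by linarith) (by linarith) (by linarith)
      (by linarith) htd (by simpa using hδpos) ht₀ hx
  have h2 : ∀ x ∈ S t₀, EMetric.infEdist x (S t) ≤ ENNReal.ofReal (3 * ε') := by
    intro x hx
    exact aux_excess S hG ht₀ hε8 hH hδpos (by linarith) (by linarith) (by linarith)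
      (by linarith) (by simpa using hδpos) htd htI hx
  have hle := EMetric.hausdorffEdist_le_of_infEdist h1 h2
  calc EMetric.hausdorffEdist (S t) (S t₀) ≤ ENNReal.ofReal (3 * ε') := hle
    _ < ENNReal.ofReal ε := by
        rw [ENNReal.ofReal_lt_ofReal_iff hε]
        linarith

/-- Inner semicontinuity follows from HP continuity at an interior point of the domain. -/
lemma aux_inner (S : ℝ → Set E) {a b t₀ : ℝ} (ht₀ : t₀ ∈ Ioo a b)
    (hhp : HPContinuousAt S (Ioo a b) t₀) : InnerSemicontinuousAt S t₀ := by
  intro x hx tk _ htkto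
  rw [Metric.tendsto_atTop]
  intro ε hε
  obtain ⟨δ, hδpos, hδS⟩ := hhp ε hε
  have hta : a < t₀ := ht₀.1
  have htb : t₀ < b := ht₀.2
  set m : ℝ := min δ (min (t₀ - a) (b - t₀)) with hm
  have hmpos : 0 < m := lt_min hδpos (lt_min (by linarith) (by linarith))
  have hev : ∀ᶠ k in atTop, tk k ∈ Metric.ball t₀ m :=
    htkto (Metric.ball_mem_nhds t₀ hmpos)
  obtain ⟨N, hN⟩ := eventually_atTop.mp hev
  refine ⟨N, fun k hk => ?_⟩
  have hball := hN k hk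
  rw [Metric.mem_ball, Real.dist_eq] at hball
  have h1 : |tk k - t₀| < δ := lt_of_lt_of_le hball (min_le_left _ _)
  have h2 : |tk k - t₀| < t₀ - a :=
    lt_of_lt_of_le hball (le_trans (min_le_right _ _) (min_le_left _ _))
  have h3 : |tk k - t₀| < b - t₀ :=
    lt_of_lt_of_le hball (le_trans (min_le_right _ _) (min_le_right _ _))
  rw [abs_lt] at h2 h3
  have htkI : tk k ∈ Ioo a b := ⟨by linarith [h2.1], by linarith [h3.2]⟩
  have hH := hδS (tk k) htkI h1
  rw [EMetric.hausdorffEdist, EMetric.hausdorffEdist_comm] at hH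
  have hinf : EMetric.infEdist x (S (tk k)) < ENNReal.ofReal ε :=
    lt_of_le_of_lt (EMetric.infEdist_le_hausdorffEdist_of_mem hx) hH
  have hlt : infDist x (S (tk k)) < ε := ENNReal.toReal_lt_of_lt_ofReal hinf
  rw [Real.dist_eq, sub_zero, abs_of_nonneg Metric.infDist_nonneg]
  exact hlt

end AuxProofs
/-- Proposition: continuity of `H_S` implies continuity of `S`: if
`H_S` is Hausdorff–Pompeiu continuous on `(a,b) ⊂ dom S`, then `S` is both outer and
inner semicontinuous at every point of `(a,b)`, and continuous for the
Hausdorff–Pompeiu metric there. -/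
theorem statement8 {E : Type*} [NormedAddCommGroup E] [InnerProductSpace ℝ E]
    [FiniteDimensional ℝ E] (S : ℝ → Set E)
    (hS : SmoothSweepingProcess S) (hbv : BoundedValues S)
    (a b : ℝ) (hdom : Ioo a b ⊆ sdom S)
    (hHS : HPContinuousOn (HSmap S) (Ioo a b)) :
    ∀ t ∈ Ioo a b, OuterSemicontinuousAt S t ∧ InnerSemicontinuousAt S t ∧
      HPContinuousAt S (Ioo a b) t := by
  intro t ht
  have hhp : HPContinuousAt S (Ioo a b) t := aux_hp S hS.1 hHS ht
  refine ⟨?_, aux_inner S ht hhp, hhp⟩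
  intro tk xk x hmem htk hxk
  have htend : Tendsto (fun k => ((tk k, xk k) : ℝ × E)) atTop (𝓝 (t, x)) :=
    htk.prodMk_nhds hxk
  exact hS.1.mem_of_tendsto htend (Filter.Eventually.of_forall hmem)
end
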